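/- arXiv:1402.5272 — 5 statements merged into one kernel-verified Lean document; each statement's English description precedes it below -/
import Mathlib

section
/- Let F be a field, k ≥ 1, and let Q ∈ M_k(F) be an invertible matrix. Suppose v : M_k(F) → M_k(F) is an F-linear map satisfying v(ab) = (Q a Q^{-1})·v(b) + v(a)·b for all a, b ∈ M_k(F). Then there exists a matrix P ∈ M_k(F) such that v(a) = P a − (Q a Q^{-1}) P for all a ∈ M_k(F); that is, every skew-derivation of M_k(F) with respect to the inner automorphism a ↦ Q a Q^{-1} is inner. -/
/-- Every skew-derivation of the matrix algebra `M_k(F)` with respect to the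
inner automorphism `a ↦ Q a Q⁻¹` is inner. -/
theorem skew_derivation_of_matrix_algebra_is_inner
    {F : Type*} [Field F] {k : ℕ} (hk : 1 ≤ k)
    (Q : Matrix (Fin k) (Fin k) F) (hQ : IsUnit Q)
    (v : Matrix (Fin k) (Fin k) F →ₗ[F] Matrix (Fin k) (Fin k) F)
    (hv : ∀ a b : Matrix (Fin k) (Fin k) F,
      v (a * b) = Q * a * Q⁻¹ * v b + v a * b) :
    ∃ P : Matrix (Fin k) (Fin k) F,
      ∀ a : Matrix (Fin k) (Fin k) F, v a = P * a - Q * a * Q⁻¹ * P := by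
  have hdet : IsUnit Q.det := (Matrix.isUnit_iff_isUnit_det Q).mp hQ
  have hQinv : Q⁻¹ * Q = 1 := Matrix.nonsing_inv_mul Q hdet
  have hQQinv : Q * Q⁻¹ = 1 := Matrix.mul_nonsing_inv Q hdet
  obtain ⟨d, hdApp⟩ : ∃ d : Matrix (Fin k) (Fin k) F → Matrix (Fin k) (Fin k) F,
      ∀ a, d a = Q⁻¹ * v a := ⟨_, fun _ => rfl⟩
  have hd : ∀ a b, d (a * b) = a * d b + d a * b := by
    intro a b
    rw [hdApp, hdApp, hdApp, hv, mul_add]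
    congr 1
    · rw [← mul_assoc, ← mul_assoc, ← mul_assoc, hQinv, one_mul, mul_assoc]
    · rw [← mul_assoc]
  have hd0 : d 0 = 0 := by rw [hdApp, map_zero, mul_zero]
  have hdlin : ∀ (c : F) (a : Matrix (Fin k) (Fin k) F), d (c • a) = c • d a := by
    intro c a; rw [hdApp, hdApp, map_smul, Matrix.mul_smul]
  have hds : ∀ (s : Finset (Fin k)) (f : Fin k → Matrix (Fin k) (Fin k) F),
      d (∑ i ∈ s, f i) = ∑ i ∈ s, d (f i) := by
    intro s f
    rw [hdApp, map_sum, Finset.mul_sum]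
    exact Finset.sum_congr rfl fun i _ => (hdApp _).symm
  set z : Fin k := ⟨0, hk⟩
  set E : Fin k → Fin k → Matrix (Fin k) (Fin k) F :=
    fun i j => Matrix.single i j 1 with hE
  have hEmul : ∀ (i j p q : Fin k), E i j * E p q = if j = p then E i q else 0 := by
    intro i j p q
    by_cases h : j = p
    · subst h; simp [hE]
    · simp [hE, h]
  have hsum1 : ∑ i, E i z * E z i = 1 := by
    have hdiag : ∀ i : Fin k, E i z * E z i = E i i := fun i => by rw [hEmul, if_pos rfl]
    rw [Finset.sum_congr rfl fun i _ => hdiag i]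
    ext a b
    rw [Matrix.sum_apply]
    simp only [hE, Matrix.single, Matrix.of_apply, Matrix.one_apply]
    by_cases h : a = b
    · subst h
      rw [if_pos rfl, Finset.sum_eq_single a]
      · rw [if_pos ⟨rfl, rfl⟩]
      · intro i _ hia; rw [if_neg]; rintro ⟨rfl, -⟩; exact hia rfl
      · simp
    · rw [if_neg h]
      apply Finset.sum_eq_zero; intro i _
      rw [if_neg]; rintro ⟨rfl, rfl⟩; exact h rfl
  obtain ⟨P0, hP0⟩ : ∃ P0 : Matrix (Fin k) (Fin k) F,
      P0 = ∑ i, d (E i z) * E z i := ⟨_, rfl⟩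
  have key : ∀ p q, d (E p q) = P0 * E p q - E p q * P0 := by
    intro p q
    have h1 : P0 * E p q = d (E p z) * E z q := by
      rw [hP0, Finset.sum_mul, Finset.sum_eq_single p]
      · rw [mul_assoc, hEmul, if_pos rfl]
      · intro i _ hip
        rw [mul_assoc, hEmul, if_neg hip, mul_zero]
      · simp
    have h2 : E p q * P0 = d (E p z) * E z q - d (E p q) := by
      rw [hP0, Finset.mul_sum]
      have hterm : ∀ i : Fin k, E p q * (d (E i z) * E z i)
          = (if q = i then d (E p z) else 0) * E z i - d (E p q) * (E i z * E z i) := by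
        intro i
        have h3 : E p q * d (E i z) = d (E p q * E i z) - d (E p q) * E i z := by
          rw [hd (E p q) (E i z), add_sub_cancel_right]
        rw [← mul_assoc, h3, hEmul, sub_mul, mul_assoc]
        by_cases h : q = i
        · rw [if_pos h, if_pos h]
        · rw [if_neg h, if_neg h, hd0, zero_mul]
      rw [Finset.sum_congr rfl (fun i _ => hterm i), Finset.sum_sub_distrib,
        ← Finset.mul_sum, hsum1, mul_one, Finset.sum_eq_single q]
      · rw [if_pos rfl]
      · intro i _ hiq; rw [if_neg (Ne.symm hiq), zero_mul]
      · simp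
    rw [h1, h2, sub_sub_cancel]
  have keyall : ∀ a, d a = P0 * a - a * P0 := by
    intro a
    have ha : a = ∑ i, ∑ j, a i j • E i j := by
      conv_lhs => rw [Matrix.matrix_eq_sum_single a]
      refine Finset.sum_congr rfl fun i _ => Finset.sum_congr rfl fun j _ => ?_
      simp [hE]
    calc d a = ∑ i, ∑ j, a i j • d (E i j) := by
            conv_lhs => rw [ha]
            rw [hds]
            refine Finset.sum_congr rfl fun i _ => ?_
            rw [hds]
            exact Finset.sum_congr rfl fun j _ => hdlin _ _
      _ = ∑ i, ∑ j, (a i j • (P0 * E i j) - a i j • (E i j * P0)) := by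
            refine Finset.sum_congr rfl fun i _ => Finset.sum_congr rfl fun j _ => ?_
            rw [key, smul_sub]
      _ = P0 * a - a * P0 := by
            conv_rhs => rw [ha]
            rw [Finset.mul_sum, Finset.sum_mul, ← Finset.sum_sub_distrib]
            refine Finset.sum_congr rfl fun i _ => ?_
            rw [Finset.mul_sum, Finset.sum_mul, ← Finset.sum_sub_distrib]
            refine Finset.sum_congr rfl fun j _ => ?_
            rw [Matrix.mul_smul, Matrix.smul_mul]
  refine ⟨Q * P0, fun a => ?_⟩
  have hva : v a = Q * d a := by
    rw [hdApp, ← mul_assoc, hQQinv, one_mul]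
  rw [hva, keyall, mul_sub]
  congr 1
  · rw [mul_assoc]
  · rw [mul_assoc (Q * a) Q⁻¹ (Q * P0), ← mul_assoc Q⁻¹ Q P0, hQinv, one_mul, mul_assoc]
end

section
/- Let F be an algebraically closed field, m ≥ 2 an integer, ζ ∈ F a primitive m-th root of unity, and k ≥ 1. Let c : M_k(F) → M_k(F) be an F-algebra automorphism with c^m = id, and let v : M_k(F) → M_k(F) be an F-linear map with v(ab) = (c a)(v b) + (v a)b for all a, b ∈ M_k(F) and v(c a) = ζ·c(v a) for all a ∈ M_k(F). Then there exist matrices Q ∈ GL_k(F) and P ∈ M_k(F) with Q^m = E_k and Q P Q^{-1} = ζ^{-1} P such that c(a) = Q a Q^{-1} and v(a) = P a − (Q a Q^{-1}) P for all a ∈ M_k(F). -/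
open Matrix

section TaftAux

variable {F : Type*} [Field F] {k : ℕ} [NeZero k]

private lemma taft_sum_stdBasis_diag_eq_one :
    (∑ r : Fin k, single r r (1 : F)) = 1 := by
  ext i j
  rw [Matrix.sum_apply]
  by_cases h : i = j
  · subst h
    rw [Matrix.one_apply_eq, Finset.sum_eq_single i
      (fun r _ hr => single_apply_of_ne _ _ _ _ _ (by tauto)) (by simp)]
    exact single_apply_same i i 1
  · rw [Matrix.one_apply_ne h]
    exact Finset.sum_eq_zero fun r _ =>
      single_apply_of_ne _ _ _ _ _ (by rintro ⟨rfl, rfl⟩; exact h rfl)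

/-- Every derivation of a matrix algebra over a field is inner. -/
private lemma taft_derivation_matrix_inner
    (d : Matrix (Fin k) (Fin k) F →ₗ[F] Matrix (Fin k) (Fin k) F)
    (hd : ∀ a b : Matrix (Fin k) (Fin k) F, d (a * b) = a * d b + d a * b) :
    ∃ T : Matrix (Fin k) (Fin k) F,
      ∀ a : Matrix (Fin k) (Fin k) F, d a = T * a - a * T := by
  set E : Fin k → Fin k → Matrix (Fin k) (Fin k) F :=
    fun i j => single i j (1 : F) with hE
  refine ⟨∑ r, d (E r 0) * E 0 r, fun a => ?_⟩
  induction a using Matrix.induction_on' with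
  | h_zero => simp
  | h_add p q hp hq => rw [map_add, hp, hq]; noncomm_ring
  | h_std_basis i j x =>
    have hx : single i j x = x • E i j := by
      simp only [hE]
      rw [smul_single, smul_eq_mul, mul_one]
    have h1 : (∑ r, d (E r 0) * E 0 r) * E i j = d (E i 0) * E 0 j := by
      rw [Finset.sum_mul, Finset.sum_eq_single i]
      · simp only [hE]
        rw [mul_assoc, single_mul_single_same, one_mul]
      · intro r _ hr
        simp only [hE]
        rw [mul_assoc, single_mul_single_of_ne (h := hr), mul_zero]
      · simp
    have h2 : E i j * (∑ r, d (E r 0) * E 0 r) = d (E i 0) * E 0 j - d (E i j) := by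
      rw [Finset.mul_sum]
      have step : ∀ r, E i j * (d (E r 0) * E 0 r)
          = d (E i j * E r 0) * E 0 r - d (E i j) * (E r 0 * E 0 r) := by
        intro r
        rw [hd (E i j) (E r 0)]
        noncomm_ring
      rw [Finset.sum_congr rfl fun r _ => step r, Finset.sum_sub_distrib]
      have ha : (∑ r, d (E i j * E r 0) * E 0 r) = d (E i 0) * E 0 j := by
        rw [Finset.sum_eq_single j]
        · simp only [hE]
          rw [single_mul_single_same, one_mul]
        · intro r _ hr
          simp only [hE]
          rw [single_mul_single_of_ne (h := Ne.symm hr)]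
          simp
        · simp
      have hb : (∑ r, d (E i j) * (E r 0 * E 0 r)) = d (E i j) := by
        rw [← Finset.mul_sum]
        have hone : (∑ r : Fin k, E r 0 * E 0 r) = 1 := by
          simp only [hE]
          simp only [single_mul_single_same, one_mul]
          exact taft_sum_stdBasis_diag_eq_one
        rw [hone, mul_one]
      rw [ha, hb]
    rw [hx, _root_.map_smul, mul_smul_comm, smul_mul_assoc, h1, h2]
    rw [smul_sub, sub_sub_cancel]

/-- Skolem–Noether for matrix algebras: every algebra automorphism is inner. -/
private lemma taft_algEquiv_matrix_semiconj
    (c : Matrix (Fin k) (Fin k) F ≃ₐ[F] Matrix (Fin k) (Fin k) F) :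
    ∃ Q : Matrix (Fin k) (Fin k) F, IsUnit Q ∧
      ∀ a : Matrix (Fin k) (Fin k) F, c a * Q = Q * a := by
  set E : Fin k → Fin k → Matrix (Fin k) (Fin k) F :=
    fun i j => single i j (1 : F) with hE
  set f : Fin k → Fin k → Matrix (Fin k) (Fin k) F := fun i j => c (E i j) with hf
  have hf00 : f 0 0 ≠ 0 := by
    simp only [hf, hE]
    intro h
    have h0 : single (0 : Fin k) (0 : Fin k) (1 : F) = 0 :=
      c.injective (by simpa using h)
    have := congrFun (congrFun h0 0) 0
    rw [single_apply_same] at this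
    simp at this
  obtain ⟨p, q, hpq⟩ : ∃ p q, f 0 0 p q ≠ 0 := by
    by_contra h
    push_neg at h
    exact hf00 (by ext p q; simpa using h p q)
  set u : Fin k → F := fun p => f 0 0 p q with hu
  have hup : u p ≠ 0 := hpq
  have hidem : f 0 0 * f 0 0 = f 0 0 := by
    simp only [hf, hE]
    rw [← _root_.map_mul, single_mul_single_same, one_mul]
  have huu : f 0 0 *ᵥ u = u := by
    ext s
    have : (f 0 0 *ᵥ u) s = (f 0 0 * f 0 0) s q := by
      simp [Matrix.mulVec, Matrix.mul_apply, dotProduct, hu]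
    rw [this, hidem]
  set Q : Matrix (Fin k) (Fin k) F := Matrix.of (fun s i => (f i 0 *ᵥ u) s) with hQ
  have hcol : ∀ (A : Matrix (Fin k) (Fin k) F) (s : Fin k) (l : Fin k),
      (A * Q) s l = ((A * f l 0) *ᵥ u) s := by
    intro A s l
    simp only [Matrix.mul_apply, hQ, Matrix.of_apply, Matrix.mulVec, dotProduct,
      Finset.mul_sum]
    rw [Finset.sum_comm]
    simp [Finset.sum_mul, mul_assoc]
  have key : ∀ i j, f i j * Q = Q * E i j := by
    intro i j
    ext s l
    rw [hcol]
    have hmul : f i j * f l 0 = if j = l then f i 0 else 0 := by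
      simp only [hf, hE]
      split_ifs with h
      · subst h; rw [← _root_.map_mul, single_mul_single_same, one_mul]
      · rw [← _root_.map_mul, single_mul_single_of_ne (h := h), map_zero]
    rw [hmul]
    by_cases h : j = l
    · subst h
      simp only [if_pos rfl]
      have : (Q * E i j) s j = Q s i := by
        simp only [hE]
        rw [mul_single_apply_same, mul_one]
      rw [this, hQ]
      rfl
    · simp only [if_neg h]
      have : (Q * E i j) s l = 0 := by
        simp only [hE]
        rw [mul_single_apply_of_ne (hbj := Ne.symm h)]
      rw [this, Matrix.zero_mulVec]
      rfl
  have semi : ∀ a : Matrix (Fin k) (Fin k) F, c a * Q = Q * a := by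
    intro a
    induction a using Matrix.induction_on' with
    | h_zero => simp
    | h_add p' q' hp hq => rw [map_add, add_mul, mul_add, hp, hq]
    | h_std_basis i j x =>
      have hx : single i j x = x • E i j := by
        simp only [hE]; rw [smul_single, smul_eq_mul, mul_one]
      rw [hx, _root_.map_smul, smul_mul_assoc, mul_smul_comm, key i j]
  have hinj : Function.Injective Q.mulVec := by
    have hker : ∀ x : Fin k → F, Q *ᵥ x = 0 → x = 0 := by
      intro x hx
      funext j
      have h1 : Q *ᵥ (E 0 j *ᵥ x) = 0 := by
        rw [Matrix.mulVec_mulVec, ← key 0 j, ← Matrix.mulVec_mulVec, hx,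
          Matrix.mulVec_zero]
      have h2 : E 0 j *ᵥ x = Function.update (0 : Fin k → F) 0 (1 * x j) := by
        simp only [hE]
        rw [Matrix.single_mulVec]
      rw [h2] at h1
      have h3 : (Q *ᵥ Function.update (0 : Fin k → F) 0 (1 * x j)) p = Q p 0 * x j := by
        simp [Matrix.mulVec, dotProduct, Function.update_apply]
      have h4 : Q p 0 = u p := by
        rw [hQ]
        show (f 0 0 *ᵥ u) p = u p
        rw [huu]
      have h5 : u p * x j = 0 := by
        rw [← h4, ← h3, h1]
        rfl
      rcases mul_eq_zero.mp h5 with h | h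
      · exact absurd h hup
      · simpa using h
    intro x y hxy
    have h6 : Q *ᵥ (x - y) = 0 := by rw [Matrix.mulVec_sub, hxy, sub_self]
    exact sub_eq_zero.mp (hker _ h6)
  exact ⟨Q, Matrix.mulVec_injective_iff_isUnit.mp hinj, semi⟩

end TaftAux

/-- Classification of Taft-algebra type actions `(c, v)` on a full matrix
algebra over an algebraically closed field: `c` is conjugation by a matrix `Q` with `Q^m = 1`
and `v` is the inner skew-derivation given by a matrix `P` with `Q P Q⁻¹ = ζ⁻¹ P`. -/
theorem taft_action_on_matrix_algebra
    {F : Type*} [Field F] [IsAlgClosed F]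
    {m : ℕ} (hm : 2 ≤ m) {ζ : F} (hζ : IsPrimitiveRoot ζ m)
    {k : ℕ} (hk : 1 ≤ k)
    (c : Matrix (Fin k) (Fin k) F ≃ₐ[F] Matrix (Fin k) (Fin k) F)
    (hcm : c ^ m = 1)
    (v : Matrix (Fin k) (Fin k) F →ₗ[F] Matrix (Fin k) (Fin k) F)
    (hv : ∀ a b : Matrix (Fin k) (Fin k) F, v (a * b) = c a * v b + v a * b)
    (hvc : ∀ a : Matrix (Fin k) (Fin k) F, v (c a) = ζ • c (v a)) :
    ∃ Q P : Matrix (Fin k) (Fin k) F, IsUnit Q ∧ Q ^ m = 1 ∧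
      Q * P * Q⁻¹ = ζ⁻¹ • P ∧
      (∀ a : Matrix (Fin k) (Fin k) F, c a = Q * a * Q⁻¹) ∧
      (∀ a : Matrix (Fin k) (Fin k) F, v a = P * a - Q * a * Q⁻¹ * P) := by
  haveI : NeZero k := ⟨by omega⟩
  haveI : Nontrivial (Matrix (Fin k) (Fin k) F) :=
    ⟨0, 1, fun h => by
      have := congrFun (congrFun h 0) 0
      rw [Matrix.one_apply_eq] at this
      simp at this⟩
  obtain ⟨Q₀, hQ₀u, hQ₀c⟩ := taft_algEquiv_matrix_semiconj c
  -- powers of c are semiconjugated by powers of Q₀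
  have hpow : ∀ (n : ℕ) (a : Matrix (Fin k) (Fin k) F),
      (c ^ n) a * Q₀ ^ n = Q₀ ^ n * a := by
    intro n
    induction n with
    | zero => intro a; simp
    | succ n ih =>
      intro a
      rw [pow_succ, pow_succ, AlgEquiv.mul_apply]
      calc (c ^ n) (c a) * (Q₀ ^ n * Q₀)
          = ((c ^ n) (c a) * Q₀ ^ n) * Q₀ := by rw [mul_assoc]
        _ = (Q₀ ^ n * c a) * Q₀ := by rw [ih]
        _ = Q₀ ^ n * (c a * Q₀) := by rw [mul_assoc]
        _ = Q₀ ^ n * (Q₀ * a) := by rw [hQ₀c]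
        _ = Q₀ ^ n * Q₀ * a := by rw [mul_assoc]
  have hcentral : ∀ a : Matrix (Fin k) (Fin k) F, Q₀ ^ m * a = a * Q₀ ^ m := by
    intro a
    have h := hpow m a
    rw [hcm] at h
    simpa using h.symm
  obtain ⟨r, hr⟩ := mem_range_scalar_of_commute_single
    (M := Q₀ ^ m) (fun i j _ => (hcentral _).symm)
  have hQ0m : Q₀ ^ m = r • (1 : Matrix (Fin k) (Fin k) F) := by
    rw [← hr, Matrix.scalar_apply, ← Matrix.smul_one_eq_diagonal]
  have hr0 : r ≠ 0 := by
    intro h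
    rw [h, zero_smul] at hQ0m
    exact (hQ₀u.pow m).ne_zero hQ0m
  obtain ⟨μ, hμ⟩ := IsAlgClosed.exists_pow_nat_eq (r⁻¹) (n := m) (by omega)
  have hμ0 : μ ≠ 0 := by
    intro h
    have h2 : r⁻¹ = 0 := by rw [← hμ, h, zero_pow (by omega : m ≠ 0)]
    exact hr0 (inv_eq_zero.mp h2)
  obtain ⟨Q, hQdef⟩ : ∃ Q : Matrix (Fin k) (Fin k) F, Q = μ • Q₀ := ⟨_, rfl⟩
  have hQu : IsUnit Q := by
    rw [Matrix.isUnit_iff_isUnit_det] at hQ₀u ⊢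
    rw [hQdef, Matrix.det_smul, Fintype.card_fin]
    exact ((isUnit_iff_ne_zero.mpr hμ0).pow k).mul hQ₀u
  have hQc : ∀ a, c a * Q = Q * a := fun a => by
    rw [hQdef, mul_smul_comm, smul_mul_assoc, hQ₀c]
  have hQm : Q ^ m = 1 := by
    rw [hQdef, smul_pow, hQ0m, hμ, smul_smul, inv_mul_cancel₀ hr0, one_smul]
  haveI : Invertible Q := Q.invertibleOfIsUnitDet ((Matrix.isUnit_iff_isUnit_det Q).mp hQu)
  have hconj : ∀ a, c a = Q * a * Q⁻¹ := fun a => by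
    rw [← hQc a, Matrix.mul_inv_cancel_right_of_invertible]
  have hinvc : ∀ a, Q⁻¹ * c a = a * Q⁻¹ := fun a => by
    rw [hconj a, ← mul_assoc, ← mul_assoc, Matrix.inv_mul_of_invertible, one_mul]
  -- v composed with Q⁻¹ is an honest derivation
  obtain ⟨d, hd_apply⟩ : ∃ d : Matrix (Fin k) (Fin k) F →ₗ[F] Matrix (Fin k) (Fin k) F,
      ∀ a, d a = Q⁻¹ * v a := ⟨(LinearMap.mulLeft F Q⁻¹).comp v, fun a => rfl⟩
  have hd : ∀ a b, d (a * b) = a * d b + d a * b := by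
    intro a b
    rw [hd_apply, hd_apply, hd_apply, hv a b, mul_add, ← mul_assoc, ← mul_assoc,
      hinvc a, mul_assoc a Q⁻¹ (v b)]
  obtain ⟨T, hT⟩ := taft_derivation_matrix_inner d hd
  obtain ⟨P₀, hP₀⟩ : ∃ P₀ : Matrix (Fin k) (Fin k) F, P₀ = Q * T := ⟨_, rfl⟩
  have hQd : ∀ a, v a = Q * d a := fun a => by
    rw [hd_apply, ← mul_assoc, Matrix.mul_inv_of_invertible, one_mul]
  have hvP₀ : ∀ a, v a = P₀ * a - c a * P₀ := by
    intro a
    rw [hQd a, hT a, mul_sub, ← mul_assoc, hP₀]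
    congr 1
    rw [← mul_assoc, ← hQc a, mul_assoc]
  obtain ⟨P₁, hP₁⟩ : ∃ P₁ : Matrix (Fin k) (Fin k) F, P₁ = Q * P₀ * Q⁻¹ := ⟨_, rfl⟩
  have hcP₀ : c P₀ = P₁ := by rw [hconj P₀, hP₁]
  obtain ⟨W, hW⟩ : ∃ W : Matrix (Fin k) (Fin k) F, W = P₀ - ζ • P₁ := ⟨_, rfl⟩
  have hWsemi : ∀ b, W * b = c b * W := by
    intro b
    obtain ⟨a, rfl⟩ : ∃ a, c a = b := ⟨c.symm b, c.apply_symm_apply b⟩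
    have heq := hvc a
    rw [hvP₀ (c a), hvP₀ a, map_sub, _root_.map_mul, _root_.map_mul, hcP₀] at heq
    have expand : W * c a - c (c a) * W
        = (P₀ * c a - c (c a) * P₀) - (ζ • (P₁ * c a - c (c a) * P₁)) := by
      rw [hW, sub_mul, mul_sub, smul_sub, smul_mul_assoc, mul_smul_comm]
      abel
    exact sub_eq_zero.mp (by rw [expand, heq, sub_self])
  have hscal2 : ∀ b, (Q⁻¹ * W) * b = b * (Q⁻¹ * W) := by
    intro b
    rw [mul_assoc, hWsemi b, ← mul_assoc, hinvc b, mul_assoc]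
  obtain ⟨r₂, hr₂⟩ := mem_range_scalar_of_commute_single
    (M := Q⁻¹ * W) (fun i j _ => (hscal2 _).symm)
  have hQW : W = r₂ • Q := by
    have h1 : Q⁻¹ * W = r₂ • 1 := by
      rw [← hr₂, Matrix.scalar_apply, ← Matrix.smul_one_eq_diagonal]
    calc W = Q * (Q⁻¹ * W) := by
            rw [← mul_assoc, Matrix.mul_inv_of_invertible, one_mul]
      _ = Q * (r₂ • 1) := by rw [h1]
      _ = r₂ • Q := by rw [mul_smul_comm, mul_one]
  have hζ1 : ζ ≠ 1 := by
    intro h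
    have hd1 := hζ.dvd_of_pow_eq_one 1 (by rw [pow_one, h])
    have := Nat.le_of_dvd one_pos hd1
    omega
  have hζ0 : ζ ≠ 0 := by
    intro h
    have h2 := hζ.pow_eq_one
    rw [h, zero_pow (by omega : m ≠ 0)] at h2
    exact zero_ne_one h2
  have hζsub : ζ - 1 ≠ 0 := sub_ne_zero.mpr hζ1
  obtain ⟨ν, hν⟩ : ∃ ν : F, ν = r₂ / (ζ - 1) := ⟨_, rfl⟩
  have hcoef : r₂ + ν = ζ * ν := by
    rw [hν]
    field_simp
    ring
  obtain ⟨P, hP⟩ : ∃ P : Matrix (Fin k) (Fin k) F, P = P₀ + ν • Q := ⟨_, rfl⟩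
  have hsub : P₀ - ζ • P₁ = r₂ • Q := by rw [← hW]; exact hQW
  have hP₀eq : P₀ = r₂ • Q + ζ • P₁ := sub_eq_iff_eq_add.mp hsub
  have hPeq : P = ζ • (P₁ + ν • Q) := by
    rw [hP, hP₀eq, smul_add, smul_smul, ← hcoef, add_smul]
    abel
  have hQPQ : Q * P * Q⁻¹ = P₁ + ν • Q := by
    calc Q * P * Q⁻¹ = Q * P₀ * Q⁻¹ + ν • (Q * Q * Q⁻¹) := by
          rw [hP, mul_add, add_mul]
          simp only [mul_smul_comm, smul_mul_assoc]
      _ = P₁ + ν • Q := by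
          rw [Matrix.mul_inv_cancel_right_of_invertible, hP₁]
  have hfinalζ : Q * P * Q⁻¹ = ζ⁻¹ • P := by
    rw [hQPQ, hPeq, smul_smul, inv_mul_cancel₀ hζ0, one_smul]
  have hfinalv : ∀ a, v a = P * a - Q * a * Q⁻¹ * P := by
    intro a
    rw [← hconj a, hP, add_mul, mul_add, smul_mul_assoc, mul_smul_comm, hQc a,
      hvP₀ a]
    abel
  exact ⟨Q, P, hQu, hQm, hfinalζ, hconj, hfinalv⟩
end

section
/- Let F be a field, m ≥ 2, ζ ∈ F a primitive m-th root of unity, k, t ≥ 1, and let P ∈ M_k(F) and invertible Q ∈ M_k(F) satisfy Q P Q^{-1} = ζ^{-t} P. Let v be the F-linear operator on M_k(F)^t defined by v(a_1, …, a_t) = (P a_1 − (Q a_t Q^{-1})P, ζ(P a_2 − a_1 P), …, ζ^{t−1}(P a_t − a_{t−1} P)). For a tuple (a_1, …, a_t) extend the indexing to all integers i ≤ t by setting ã_i := Q^s a_{i+st} Q^{-s}, where s ≥ 0 is the least integer with 1 ≤ i + st ≤ t (so ã_i = a_i for 1 ≤ i ≤ t). Then for every 1 ≤ ℓ ≤ m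 and every 1 ≤ r ≤ t, the r-th component of v^ℓ(a_1, …, a_t) equals ζ^{ℓ(r−1)} · Σ_{j=0}^{ℓ} (−1)^j ζ^{−j(j−1)/2} binom(ℓ,j)_{ζ^{-1}} P^{ℓ−j} ã_{r−j} P^j. -/
def qbinom {F : Type*} [Field F] (q : F) : ℕ → ℕ → F
  | _, 0 => 1
  | 0, _ + 1 => 0
  | n + 1, k + 1 => q ^ (k + 1) * qbinom q n (k + 1) + qbinom q n k

section QB
variable {F : Type*} [Field F] (q : F)

lemma qbinom_zero_right (n : ℕ) : qbinom q n 0 = 1 := by cases n <;> rfl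

lemma qbinom_succ (n k : ℕ) :
    qbinom q (n+1) (k+1) = q ^ (k+1) * qbinom q n (k+1) + qbinom q n k := rfl

lemma qbinom_of_lt : ∀ n k, n < k → qbinom q n k = 0 := by
  intro n
  induction n with
  | zero => intro k hk; match k, hk with | k+1, _ => rfl
  | succ n ih =>
    intro k hk
    match k, hk with
    | k+1, hk =>
      rw [qbinom_succ, ih (k+1) (by omega), ih k (by omega)]
      ring

lemma qbinom_self : ∀ n, qbinom q n n = 1 := by
  intro n
  induction n with
  | zero => rfl
  | succ n ih => rw [qbinom_succ, qbinom_of_lt q n (n+1) (by omega), ih]; ring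

lemma qbinom_aux : ∀ n, ∀ k ≤ n,
    (q ^ (k+1) - 1) * qbinom q (n+1) (k+1) = (q ^ (n+1-k) - 1) * qbinom q (n+1) k := by
  intro n
  induction n with
  | zero =>
    intro k hk
    interval_cases k
    simp [qbinom_succ, qbinom_self, qbinom_of_lt q 0 1 (by omega), qbinom_zero_right]
  | succ n ih =>
    intro k hk
    rcases Nat.eq_or_lt_of_le hk with h | h
    · subst h
      rw [qbinom_self]
      have h1 : qbinom q (n+2) (n+1) = q^(n+1) * qbinom q (n+1) (n+1) + qbinom q (n+1) n :=
        qbinom_succ q (n+1) n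
      have h2 := ih n le_rfl
      rw [qbinom_self] at h2
      have e : n + 1 - n = 1 := by omega
      rw [e] at h2
      rw [h1, qbinom_self]
      have e2 : n + 1 + 1 - (n+1) = 1 := by omega
      rw [e2]
      linear_combination h2
    · rcases Nat.eq_zero_or_pos k with hk0 | hk0
      · subst hk0
        have h2 := ih 0 (by omega)
        rw [qbinom_zero_right] at h2 ⊢
        rw [qbinom_succ, qbinom_zero_right]
        have e : n + 1 - 0 = n + 1 := by omega
        have e2 : n + 1 + 1 - 0 = n + 2 := by omega
        rw [e] at h2; rw [e2]
        linear_combination q * h2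
      · obtain ⟨k, rfl⟩ : ∃ k', k = k' + 1 := ⟨k - 1, by omega⟩
        have hkn : k + 1 ≤ n := by omega
        have h1 := ih (k+1) hkn
        have h2 := ih k (by omega)
        rw [qbinom_succ q (n+1) (k+1), qbinom_succ q (n+1) k]
        have e1 : n + 1 - (k+1) = n - k := by omega
        have e2 : n + 1 - k = n - k + 1 := by omega
        have e3 : n + 1 + 1 - (k+1) = n - k + 1 := by omega
        rw [e1] at h1; rw [e2] at h2; rw [e3]
        have epow : q ^ (n - k + 1) = q ^ (n - k) * q := by
          rw [pow_succ]
        rw [epow] at h2 ⊢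
        linear_combination q^(k+1+1) * h1 + h2

lemma qbinom_pascal' {n k : ℕ} (h : k ≤ n) :
    qbinom q (n+1) (k+1) = qbinom q n (k+1) + q ^ (n-k) * qbinom q n k := by
  rw [qbinom_succ]
  rcases Nat.eq_or_lt_of_le h with h1 | h1
  · subst h1
    rw [qbinom_of_lt q k (k+1) (by omega)]
    simp
  · obtain ⟨n, rfl⟩ : ∃ n', n = n' + 1 := ⟨n - 1, by omega⟩
    have := qbinom_aux q n k (by omega)
    linear_combination this

lemma tri_succ (j : ℕ) : (j+1)*j/2 = j*(j-1)/2 + j := by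
  cases j with
  | zero => simp
  | succ i =>
    obtain ⟨c, hc⟩ := Nat.even_mul_succ_self i
    have e1 : (i+1+1)*(i+1) = i*(i+1) + 2*(i+1) := by ring
    have e2 : (i+1)*(i+1-1) = i*(i+1) := by rw [Nat.add_sub_cancel]; ring
    rw [e1, e2, hc]
    omega

lemma dcoef {ℓ j : ℕ} (hj : j ≤ ℓ) :
    (-1:F)^(j+1) * q^((j+1)*((j+1)-1)/2) * qbinom q (ℓ+1) (j+1)
      = (-1:F)^(j+1) * q^((j+1)*((j+1)-1)/2) * qbinom q ℓ (j+1)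
        - q^ℓ * ((-1:F)^j * q^(j*(j-1)/2) * qbinom q ℓ j) := by
  rw [qbinom_pascal' q hj]
  have e0 : (j+1) - 1 = j := rfl
  rw [e0, tri_succ j]
  have epow1 : q ^ (j*(j-1)/2 + j) = q ^ (j*(j-1)/2) * q ^ j := pow_add q _ _
  have epow2 : (q:F) ^ ℓ = q ^ (ℓ - j) * q ^ j := by
    rw [← pow_add]; congr 1; omega
  rw [epow1, epow2]
  ring

end QB

noncomputable def cop {F : Type*} [Field F] {k t : ℕ} (Q : Matrix (Fin k) (Fin k) F)
    (a : Fin t → Matrix (Fin k) (Fin k) F) (i : Fin t) : Matrix (Fin k) (Fin k) F :=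
  if i.1 = 0 then
    Q * a ⟨t - 1, Nat.sub_lt (Nat.lt_of_le_of_lt (Nat.zero_le _) i.2) Nat.one_pos⟩ * Q⁻¹
  else a ⟨i.1 - 1, Nat.lt_of_le_of_lt (Nat.sub_le _ _) i.2⟩

noncomputable def vop {F : Type*} [Field F] {k t : ℕ} (ζ : F) (P Q : Matrix (Fin k) (Fin k) F)
    (a : Fin t → Matrix (Fin k) (Fin k) F) (i : Fin t) : Matrix (Fin k) (Fin k) F :=
  ζ ^ i.1 • (P * a i - cop Q a i * P)

noncomputable def extIdx {F : Type*} [Field F] {k t : ℕ} (ht : 0 < t) (Q : Matrix (Fin k) (Fin k) F)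
    (a : Fin t → Matrix (Fin k) (Fin k) F) (i : ℤ) : Matrix (Fin k) (Fin k) F :=
  Q ^ (-((i - 1) / (t : ℤ))).toNat *
    a ⟨((i - 1) % (t : ℤ)).toNat, by
      have h0 : (0 : ℤ) < (t : ℤ) := by exact_mod_cast ht
      have h1 := Int.emod_lt_of_pos (i - 1) h0
      have h2 := Int.emod_nonneg (i - 1) h0.ne'
      omega⟩ *
    Q⁻¹ ^ (-((i - 1) / (t : ℤ))).toNat

noncomputable def Sop {F : Type*} [Field F] {k t : ℕ} (ζ : F) (P Q : Matrix (Fin k) (Fin k) F)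
    (ht : 0 < t) (a : Fin t → Matrix (Fin k) (Fin k) F) (ℓ : ℕ) (r : ℤ) :
    Matrix (Fin k) (Fin k) F :=
  ∑ j ∈ Finset.range (ℓ + 1),
    ((-1 : F) ^ j * ζ⁻¹ ^ (j * (j - 1) / 2) * qbinom ζ⁻¹ ℓ j) •
      (P ^ (ℓ - j) * extIdx ht Q a (r - j) * P ^ j)

section Main
variable {F : Type*} [Field F] {k t : ℕ} (ht : 0 < t)
  (ζ : F) (P Q : Matrix (Fin k) (Fin k) F)
  (a : Fin t → Matrix (Fin k) (Fin k) F)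

lemma extIdx_eq (s : ℕ) (n : ℕ) (hn : n < t) (i : ℤ)
    (h1 : (-((i - 1) / (t : ℤ))).toNat = s) (h2 : ((i - 1) % (t : ℤ)).toNat = n) :
    extIdx ht Q a i = Q ^ s * a ⟨n, hn⟩ * Q⁻¹ ^ s := by
  subst h1; subst h2; rfl

lemma extIdx_of_mem {r : ℕ} (hr1 : 1 ≤ r) (hrt : r ≤ t) :
    extIdx ht Q a (r : ℤ) = a ⟨r - 1, by omega⟩ := by
  have h0 : (0 : ℤ) < (t : ℤ) := by exact_mod_cast ht
  have hd : ((r : ℤ) - 1) / (t : ℤ) = 0 := by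
    apply Int.ediv_eq_zero_of_lt
    · omega
    · exact_mod_cast by omega
  have hm : ((r : ℤ) - 1) % (t : ℤ) = (r : ℤ) - 1 :=
    Int.emod_eq_of_lt (by omega) (by omega)
  rw [extIdx_eq ht Q a 0 (r-1) (by omega) r (by rw [hd]; rfl) (by rw [hm]; omega)]
  simp

lemma extIdx_shift {i : ℤ} (hi : i ≤ (t : ℤ)) :
    extIdx ht Q a (i - t) = Q * extIdx ht Q a i * Q⁻¹ := by
  have h0 : (0 : ℤ) < (t : ℤ) := by exact_mod_cast ht
  have hdiv : (i - t - 1) / (t : ℤ) = (i - 1) / (t : ℤ) - 1 := by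
    have h := Int.add_mul_ediv_right (i - 1) (-1) h0.ne'
    have e : i - 1 + -1 * (t : ℤ) = i - t - 1 := by ring
    rw [e] at h
    omega
  have hmod : (i - t - 1) % (t : ℤ) = (i - 1) % (t : ℤ) := by
    have e : i - t - 1 = i - 1 - t := by ring
    rw [e, Int.sub_emod, Int.emod_self, sub_zero, Int.emod_emod_of_dvd _ dvd_rfl]
  have hle : (i - 1) / (t : ℤ) ≤ 0 := by
    have h1 : (i - 1) / (t : ℤ) ≤ ((t : ℤ) - 1) / (t : ℤ) :=
      Int.ediv_le_ediv h0 (by omega)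
    have h2 : ((t : ℤ) - 1) / (t : ℤ) = 0 := Int.ediv_eq_zero_of_lt (by omega) (by omega)
    omega
  set s := (-((i - 1) / (t : ℤ))).toNat with hs
  set n := ((i - 1) % (t : ℤ)).toNat with hn
  have hnt : n < t := by
    have h1 := Int.emod_lt_of_pos (i - 1) h0
    have h2 := Int.emod_nonneg (i - 1) h0.ne'
    omega
  rw [extIdx_eq ht Q a s n hnt i rfl rfl,
      extIdx_eq ht Q a (s+1) n hnt (i - t) (by rw [hdiv]; omega) (by rw [hmod])]
  rw [pow_succ' Q s, pow_succ Q⁻¹ s]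
  noncomm_ring


lemma hQinv (hQu : IsUnit Q) : Q * Q⁻¹ = 1 :=
  Matrix.mul_nonsing_inv Q ((Matrix.isUnit_iff_isUnit_det Q).mp hQu)

lemma hinvQ (hQu : IsUnit Q) : Q⁻¹ * Q = 1 :=
  Matrix.nonsing_inv_mul Q ((Matrix.isUnit_iff_isUnit_det Q).mp hQu)

variable (hζ0 : ζ ≠ 0) (hQu : IsUnit Q) (hQP : Q * P * Q⁻¹ = (ζ ^ t)⁻¹ • P)

lemma hPQ (hζ0 : ζ ≠ 0) (hQu : IsUnit Q) (hQP : Q * P * Q⁻¹ = (ζ ^ t)⁻¹ • P) : P * Q = ζ ^ t • (Q * P) := by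
  have h1 : Q * P = (ζ ^ t)⁻¹ • (P * Q) := by
    have h := congrArg (· * Q) hQP
    simp only [Matrix.smul_mul] at h
    rw [mul_assoc, hinvQ Q hQu, mul_one] at h
    exact h
  rw [h1, smul_smul, mul_inv_cancel₀ (pow_ne_zero _ hζ0), one_smul]

lemma hPnQ (hζ0 : ζ ≠ 0) (hQu : IsUnit Q) (hQP : Q * P * Q⁻¹ = (ζ ^ t)⁻¹ • P) : ∀ n : ℕ, P ^ n * Q = ζ ^ (t * n) • (Q * P ^ n) := by
  intro n
  induction n with
  | zero => simp
  | succ n ih =>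
    rw [pow_succ, mul_assoc, hPQ ζ P Q hζ0 hQu hQP, Matrix.mul_smul, ← mul_assoc, ih,
      Matrix.smul_mul, smul_smul, ← pow_add, mul_assoc, ← pow_succ]
    congr 2
    ring

lemma hQPn (hζ0 : ζ ≠ 0) (hQu : IsUnit Q) (hQP : Q * P * Q⁻¹ = (ζ ^ t)⁻¹ • P) (n : ℕ) : Q * P ^ n = (ζ ^ (t * n))⁻¹ • (P ^ n * Q) := by
  rw [hPnQ ζ P Q hζ0 hQu hQP n, smul_smul, inv_mul_cancel₀ (pow_ne_zero _ hζ0), one_smul]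

lemma hPnQi (hζ0 : ζ ≠ 0) (hQu : IsUnit Q) (hQP : Q * P * Q⁻¹ = (ζ ^ t)⁻¹ • P) (n : ℕ) : P ^ n * Q⁻¹ = (ζ ^ (t * n))⁻¹ • (Q⁻¹ * P ^ n) := by
  have h := congrArg (fun X => Q⁻¹ * X * Q⁻¹) (hPnQ ζ P Q hζ0 hQu hQP n)
  simp only [Matrix.mul_smul, Matrix.smul_mul] at h
  rw [← mul_assoc, ← mul_assoc, hinvQ Q hQu, one_mul, mul_assoc (Q⁻¹ * P ^ n), hQinv Q hQu,
    mul_one] at h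
  rw [h, smul_smul, inv_mul_cancel₀ (pow_ne_zero _ hζ0), one_smul]

lemma S_shift (hζ0 : ζ ≠ 0) (hQu : IsUnit Q) (hQP : Q * P * Q⁻¹ = (ζ ^ t)⁻¹ • P) (ℓ : ℕ) (r : ℤ) (hr : r ≤ (t : ℤ)) :
    Q * Sop ζ P Q ht a ℓ r * Q⁻¹ = (ζ ^ (t * ℓ))⁻¹ • Sop ζ P Q ht a ℓ (r - t) := by
  unfold Sop
  rw [Finset.mul_sum, Finset.sum_mul, Finset.smul_sum]
  apply Finset.sum_congr rfl
  intro j hj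
  have hjl : j ≤ ℓ := by
    simp only [Finset.mem_range] at hj; omega
  rw [Matrix.mul_smul, Matrix.smul_mul]
  have conj : Q * extIdx ht Q a (r - j) * Q⁻¹ = extIdx ht Q a (r - t - j) := by
    rw [← extIdx_shift ht Q a (show r - (j : ℤ) ≤ (t : ℤ) by omega)]
    ring_nf
  have key : Q * (P ^ (ℓ - j) * extIdx ht Q a (r - j) * P ^ j) * Q⁻¹
      = (ζ ^ (t * ℓ))⁻¹ • (P ^ (ℓ - j) * extIdx ht Q a (r - t - j) * P ^ j) := by
    calc Q * (P ^ (ℓ - j) * extIdx ht Q a (r - j) * P ^ j) * Q⁻¹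
        = (Q * P ^ (ℓ - j)) * extIdx ht Q a (r - j) * (P ^ j * Q⁻¹) := by
          simp only [mul_assoc]
      _ = ((ζ ^ (t * (ℓ - j)))⁻¹ • (P ^ (ℓ - j) * Q)) * extIdx ht Q a (r - j) *
            ((ζ ^ (t * j))⁻¹ • (Q⁻¹ * P ^ j)) := by
          rw [hQPn ζ P Q hζ0 hQu hQP (ℓ - j), hPnQi ζ P Q hζ0 hQu hQP j]
      _ = ((ζ ^ (t * (ℓ - j)))⁻¹ * (ζ ^ (t * j))⁻¹) •
            (P ^ (ℓ - j) * (Q * extIdx ht Q a (r - j) * Q⁻¹) * P ^ j) := by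
          simp only [Matrix.smul_mul, Matrix.mul_smul, smul_smul, mul_assoc]
          ring_nf
      _ = (ζ ^ (t * ℓ))⁻¹ • (P ^ (ℓ - j) * extIdx ht Q a (r - t - j) * P ^ j) := by
          rw [conj]
          congr 1
          rw [← mul_inv, ← pow_add, ← mul_add, Nat.sub_add_cancel hjl]
  rw [key, smul_comm]

lemma S_rec (ℓ : ℕ) (r : ℤ) :
    Sop ζ P Q ht a (ℓ + 1) r
      = P * Sop ζ P Q ht a ℓ r - ζ⁻¹ ^ ℓ • (Sop ζ P Q ht a ℓ (r - 1) * P) := by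
  set q := ζ⁻¹ with hq
  set T : ℕ → Matrix (Fin k) (Fin k) F :=
    fun j => P ^ (ℓ + 1 - j) * extIdx ht Q a (r - j) * P ^ j with hT
  set d : ℕ → ℕ → F := fun n j => (-1 : F) ^ j * q ^ (j * (j - 1) / 2) * qbinom q n j with hd
  have hL : Sop ζ P Q ht a (ℓ + 1) r = ∑ j ∈ Finset.range (ℓ + 2), d (ℓ + 1) j • T j := rfl
  have hR1 : P * Sop ζ P Q ht a ℓ r = ∑ j ∈ Finset.range (ℓ + 1), d ℓ j • T j := by
    unfold Sop
    rw [Finset.mul_sum]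
    apply Finset.sum_congr rfl
    intro j hj
    have hjl : j ≤ ℓ := by simp only [Finset.mem_range] at hj; omega
    rw [mul_smul_comm]
    congr 1
    simp only [hT]
    have e1 : ℓ + 1 - j = (ℓ - j) + 1 := by omega
    rw [e1, pow_succ']
    simp only [mul_assoc]
  have hR2 : Sop ζ P Q ht a ℓ (r - 1) * P = ∑ j ∈ Finset.range (ℓ + 1), d ℓ j • T (j + 1) := by
    unfold Sop
    rw [Finset.sum_mul]
    apply Finset.sum_congr rfl
    intro j hj
    have hjl : j ≤ ℓ := by simp only [Finset.mem_range] at hj; omega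
    rw [Matrix.smul_mul]
    congr 1
    simp only [hT]
    have e1 : ℓ + 1 - (j + 1) = ℓ - j := by omega
    have e2 : r - 1 - (j : ℤ) = r - ((j + 1 : ℕ) : ℤ) := by push_cast; ring
    rw [e1, e2, mul_assoc, mul_assoc, ← pow_succ]
    simp only [mul_assoc]
  rw [hL, hR1, hR2, Finset.sum_range_succ' _ (ℓ + 1)]
  have hstep : ∀ i ∈ Finset.range (ℓ + 1),
      d (ℓ + 1) (i + 1) • T (i + 1) = d ℓ (i + 1) • T (i + 1) - (q ^ ℓ * d ℓ i) • T (i + 1) := by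
    intro i hi
    have hil : i ≤ ℓ := by simp only [Finset.mem_range] at hi; omega
    rw [← sub_smul]
    congr 1
    exact dcoef q hil
  rw [Finset.sum_congr rfl hstep, Finset.sum_sub_distrib]
  have hlast : ∑ i ∈ Finset.range (ℓ + 1), d ℓ (i + 1) • T (i + 1)
      = ∑ i ∈ Finset.range ℓ, d ℓ (i + 1) • T (i + 1) := by
    rw [Finset.sum_range_succ]
    have : d ℓ (ℓ + 1) = 0 := by
      rw [hd]
      simp only [qbinom_of_lt q ℓ (ℓ + 1) (by omega)]
      ring
    rw [this, zero_smul, add_zero]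
  have hd0 : ∀ n, d n 0 • T 0 = T 0 := by
    intro n
    rw [hd]
    simp [qbinom_zero_right]
  rw [hlast, hd0, Finset.sum_range_succ' (fun j => d ℓ j • T j) ℓ, hd0, Finset.smul_sum]
  have hsc : ∀ i, (q ^ ℓ * d ℓ i) • T (i + 1) = q ^ ℓ • d ℓ i • T (i + 1) := by
    intro i; rw [smul_smul]
  simp only [hsc]
  abel


lemma key_induction (hζ0 : ζ ≠ 0) (hQu : IsUnit Q)
    (hQP : Q * P * Q⁻¹ = (ζ ^ t)⁻¹ • P) :
    ∀ ℓ : ℕ, ∀ r : ℕ, 1 ≤ r → (hrt : r ≤ t) →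
      (vop ζ P Q)^[ℓ] a ⟨r - 1, by omega⟩ = ζ ^ (ℓ * (r - 1)) • Sop ζ P Q ht a ℓ r := by
  intro ℓ
  induction ℓ with
  | zero =>
    intro r h1 h2
    simp only [Function.iterate_zero, id_eq, Nat.zero_mul, pow_zero, one_smul, Sop]
    rw [Finset.sum_range_succ, Finset.sum_range_zero, zero_add]
    rw [show ((r : ℤ) - ((0 : ℕ) : ℤ)) = (r : ℤ) by push_cast; ring]
    rw [extIdx_of_mem ht Q a h1 h2]
    simp [qbinom_zero_right]
  | succ ℓ ih =>
    intro r h1 h2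
    rw [Function.iterate_succ_apply', vop]
    rcases eq_or_lt_of_le h1 with hr1 | hr2
    · -- r = 1
      subst hr1
      have hidx : ((⟨1 - 1, by omega⟩ : Fin t) : Fin t).1 = 0 := rfl
      rw [cop]
      simp only [hidx, eq_self_iff_true, if_true]
      rw [ih 1 le_rfl (by omega), ih t (by omega) le_rfl]
      have hcast : ((t : ℕ) : ℤ) - (t : ℤ) = ((1 : ℕ) : ℤ) - 1 := by push_cast; ring
      have hshift : Q * (ζ ^ (ℓ * (t - 1)) • Sop ζ P Q ht a ℓ (t : ℤ)) * Q⁻¹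
          = ζ⁻¹ ^ ℓ • Sop ζ P Q ht a ℓ (((1 : ℕ) : ℤ) - 1) := by
        rw [Matrix.mul_smul, Matrix.smul_mul,
          S_shift ht ζ P Q a hζ0 hQu hQP ℓ (t : ℤ) le_rfl, hcast, smul_smul]
        congr 1
        have ht2 : ζ ^ (t * ℓ) = ζ ^ (ℓ * (t - 1)) * ζ ^ ℓ := by
          rw [← pow_add]
          congr 1
          obtain ⟨t', rfl⟩ : ∃ t', t = t' + 1 := ⟨t - 1, by omega⟩
          simp only [Nat.add_sub_cancel]
          ring
        rw [ht2, mul_inv, ← mul_assoc, mul_inv_cancel₀ (pow_ne_zero _ hζ0), one_mul, inv_pow]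
      rw [hshift]
      have hrec := S_rec ht ζ P Q a ℓ (((1 : ℕ) : ℤ))
      simp only [show ((1 : ℕ) : ℤ) = (1 : ℤ) from rfl] at hrec ⊢
      rw [show (1:ℤ) - 1 = 0 from rfl] at hrec ⊢
      simp only [Nat.sub_self, Nat.mul_zero, pow_zero, one_smul]
      rw [hrec, Matrix.smul_mul]
    · -- r ≥ 2
      obtain ⟨r', rfl⟩ : ∃ r', r = r' + 2 := ⟨r - 2, by omega⟩
      rw [cop]
      have ihA := ih (r' + 2) (by omega) h2
      have ihB := ih (r' + 1) (by omega) (by omega)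
      simp only [show r' + 2 - 1 = r' + 1 from rfl, show r' + 1 - 1 = r' from rfl] at ihA ihB ⊢
      rw [if_neg (by omega : ¬ (r' + 1 = 0))]
      rw [ihA, ihB]
      have ecast : ((r' + 2 : ℕ) : ℤ) - 1 = ((r' + 1 : ℕ) : ℤ) := by push_cast; ring
      have hrec := S_rec ht ζ P Q a ℓ ((r' + 2 : ℕ) : ℤ)
      rw [ecast] at hrec
      rw [hrec]
      rw [mul_smul_comm, Matrix.smul_mul, smul_sub, smul_smul, smul_smul, smul_sub, smul_smul]
      congr 1
      · congr 1
        rw [← pow_add]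
        congr 1
        ring
      · congr 1
        have ht2 : ζ ^ ((ℓ + 1) * (r' + 1)) = (ζ ^ (r' + 1) * ζ ^ (ℓ * r')) * ζ ^ ℓ := by
          rw [← pow_add, ← pow_add]
          congr 1
          ring
        rw [ht2, inv_pow, mul_assoc, mul_inv_cancel₀ (pow_ne_zero _ hζ0), mul_one]

end Main

/-- Formula for the powers of the operator `v` on `M_k(F)^t`:
the `r`-th component (1-based) of `v^ℓ (a_1, …, a_t)` equals
`ζ^{ℓ(r−1)} Σ_{j=0}^{ℓ} (−1)^j ζ^{−j(j−1)/2} binom(ℓ,j)_{ζ⁻¹} P^{ℓ−j} ã_{r−j} P^j`. -/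
theorem vop_iterate_formula
    {F : Type*} [Field F] {m : ℕ} (hm : 2 ≤ m) {ζ : F} (hζ : IsPrimitiveRoot ζ m)
    {k t : ℕ} (hk : 0 < k) (ht : 0 < t)
    (P Q : Matrix (Fin k) (Fin k) F) (hQu : IsUnit Q)
    (hQP : Q * P * Q⁻¹ = (ζ ^ t)⁻¹ • P)
    (a : Fin t → Matrix (Fin k) (Fin k) F)
    (ℓ r : ℕ) (hℓ1 : 1 ≤ ℓ) (hℓm : ℓ ≤ m) (hr1 : 1 ≤ r) (hrt : r ≤ t) :
    (vop ζ P Q)^[ℓ] a ⟨r - 1, by omega⟩ =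
      ζ ^ (ℓ * (r - 1)) •
        ∑ j ∈ Finset.range (ℓ + 1),
          ((-1 : F) ^ j * ζ⁻¹ ^ (j * (j - 1) / 2) * qbinom ζ⁻¹ ℓ j) •
            (P ^ (ℓ - j) * extIdx ht Q a ((r : ℤ) - (j : ℤ)) * P ^ j) := by
  have hζ0 : ζ ≠ 0 := by
    intro h
    have := hζ.pow_eq_one
    rw [h] at this
    simp [zero_pow (by omega : m ≠ 0)] at this
  exact key_induction ht ζ P Q a hζ0 hQu hQP ℓ r hr1 hrt
end

section
/- Let F be a field, m ≥ 2, ζ ∈ F a primitive m-th root of unity, k, t ≥ 1 with t dividing m, and let P ∈ M_k(F) and Q ∈ GL_k(F) satisfy Q^{m/t} = E_k and Q P Q^{-1} = ζ^{-t} P. Let v be the F-linear operator on M_k(F)^t defined by v(a_1, …, a_t) = (P a_1 − (Q a_t Q^{-1})P, ζ(P a_2 − a_1 P), …, ζ^{t−1}(P a_t − a_{t−1} P)). Then v^m(a_1, …, a_t) = (P^m a_1 − a_1 P^m, P^m a_2 − a_2 P^m, …, P^m a_t − a_t P^m) for all a_1, …, a_t ∈ M_k(F); consequently v^m = 0 if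 and only if P^m = α E_k for some α ∈ F. -/
namespace VopAux

variable {F : Type*} [Field F]

/-! ### Signed q-binomial coefficients -/

/-- Signed q-binomial coefficients for expanding `(x-y)^n` when `y*x = q•(x*y)`. -/
def qC (q : F) : ℕ → ℕ → F
  | 0, 0 => 1
  | 0, _+1 => 0
  | n+1, 0 => qC q n 0
  | n+1, j+1 => qC q n (j+1) - q ^ (n - j) * qC q n j

lemma qC_zero (q : F) : ∀ n, qC q n 0 = 1
  | 0 => rfl
  | n+1 => qC_zero q n

lemma qC_of_lt (q : F) : ∀ {n j}, n < j → qC q n j = 0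
  | 0, _+1, _ => rfl
  | n+1, j+1, h => by
    rw [qC, qC_of_lt q (show n < j+1 by omega), qC_of_lt q (show n < j by omega)]
    ring

lemma qC_diag (q : F) : ∀ n, qC q n n = (-1) ^ n
  | 0 => by norm_num [qC]
  | n+1 => by
    rw [qC, qC_of_lt q (Nat.lt_succ_self n), qC_diag q n, Nat.sub_self, pow_zero]
    ring

lemma qC_rel (q : F) : ∀ n j, (1 - q ^ (j+1)) * qC q n (j+1) = (q ^ (n-j) - 1) * qC q n j := by
  intro n
  induction n with
  | zero =>
    rintro (_|j)
    · simp [qC]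
    · simp [qC, qC_of_lt q (show 0 < j+2 by omega)]
  | succ n ih =>
    intro j
    rcases le_or_gt j n with hj | hj
    · rcases j with _|j'
      · have h0 := ih 0
        rw [qC_zero] at h0
        rw [show qC q (n+1) (0+1) = qC q n (0+1) - q ^ (n - 0) * qC q n 0 from rfl,
          qC_zero, qC_zero]
        simp only [Nat.sub_zero] at *
        linear_combination h0
      · have h1 := ih (j'+1)
        have h2 := ih j'
        have hy : q ^ (n-j') = q ^ (n-(j'+1)) * q := by
          rw [← pow_succ]; congr 1; omega
        have hz : q ^ (n+1-(j'+1)) = q ^ (n-j') := by congr 1; omega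
        rw [show qC q (n+1) (j'+1+1) = qC q n (j'+1+1) - q ^ (n - (j'+1)) * qC q n (j'+1) from rfl,
          show qC q (n+1) (j'+1) = qC q n (j'+1) - q ^ (n - j') * qC q n j' from rfl,
          hz, hy]
        rw [hy] at h2
        linear_combination h1 - (q ^ (n-(j'+1)) * q) * h2
    · rw [qC_of_lt q (show n+1 < j+1 by omega)]
      rcases eq_or_lt_of_le (show n+1 ≤ j from hj) with hj' | hj'
      · rw [← hj', Nat.sub_self, pow_zero, sub_self, zero_mul, mul_zero]
      · rw [qC_of_lt q hj', mul_zero, mul_zero]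

lemma qC_eq_zero {q : F} {m : ℕ} (hm : 2 ≤ m) (hq : IsPrimitiveRoot q m) :
    ∀ {j}, 0 < j → j < m → qC q m j = 0 := by
  intro j
  induction j with
  | zero => omega
  | succ j ih =>
    intro _ hjm
    have hrel := qC_rel q m j
    have hne : (1 : F) - q ^ (j+1) ≠ 0 :=
      sub_ne_zero.mpr (hq.pow_ne_one_of_pos_of_lt (by omega) (by omega)).symm
    rcases Nat.eq_zero_or_pos j with rfl | hj
    · rw [qC_zero, mul_one, Nat.sub_zero, hq.pow_eq_one, sub_self] at hrel
      exact (mul_eq_zero.mp hrel).resolve_left hne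
    · rw [ih hj (by omega), mul_zero] at hrel
      exact (mul_eq_zero.mp hrel).resolve_left hne

/-! ### The quantum binomial theorem -/

variable {R : Type*} [Ring R] [Algebra F R]

lemma qsemiconj {q : F} {x y : R} (hc : y * x = q • (x * y)) :
    ∀ s, y * x ^ s = q ^ s • (x ^ s * y)
  | 0 => by simp
  | s+1 => by
    rw [pow_succ, ← mul_assoc, qsemiconj hc s, smul_mul_assoc, mul_assoc, hc,
      mul_smul_comm, smul_smul, pow_succ, ← mul_assoc]

lemma sub_pow_expand {q : F} {x y : R} (hc : y * x = q • (x * y)) (n : ℕ) :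
    (x - y) ^ n = ∑ j ∈ Finset.range (n+1), qC q n j • (x ^ (n-j) * y ^ j) := by
  induction n with
  | zero => simp [qC]
  | succ n ih =>
    rw [pow_succ', ih, Finset.mul_sum]
    have hxy : ∀ j ∈ Finset.range (n+1),
        (x - y) * (qC q n j • (x ^ (n-j) * y ^ j)) =
          qC q n j • (x ^ (n+1-j) * y ^ j)
            - (q ^ (n-j) * qC q n j) • (x ^ (n-j) * y ^ (j+1)) := by
      intro j hj
      rw [Finset.mem_range] at hj
      rw [sub_mul]
      congr 1
      · rw [mul_smul_comm, ← mul_assoc, ← pow_succ']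
        congr 3
        omega
      · rw [mul_smul_comm, ← mul_assoc, qsemiconj hc, smul_mul_assoc, smul_smul,
          mul_assoc, ← pow_succ', mul_comm (qC q n j) (q ^ (n-j))]
    rw [Finset.sum_congr rfl hxy, Finset.sum_sub_distrib]
    rw [Finset.sum_range_succ' (fun j => qC q (n+1) j • (x ^ (n+1-j) * y ^ j)) (n+1)]
    have e1 : ∀ j ∈ Finset.range (n+1),
        qC q (n+1) (j+1) • (x ^ (n+1-(j+1)) * y ^ (j+1)) =
          qC q n (j+1) • (x ^ (n-j) * y ^ (j+1))
            - (q ^ (n-j) * qC q n j) • (x ^ (n-j) * y ^ (j+1)) := by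
      intro j hj
      rw [show qC q (n+1) (j+1) = qC q n (j+1) - q ^ (n-j) * qC q n j from rfl,
        Nat.succ_sub_succ, sub_smul]
    rw [Finset.sum_congr rfl e1, Finset.sum_sub_distrib,
      show qC q (n+1) 0 = qC q n 0 from rfl]
    rw [Finset.sum_range_succ' (fun j => qC q n j • (x ^ (n+1-j) * y ^ j)) n]
    have e2 : ∀ j ∈ Finset.range (n+1),
        qC q n (j+1) • (x ^ (n-j) * y ^ (j+1)) =
          (fun j => qC q n (j+1) • (x ^ (n+1-(j+1)) * y ^ (j+1))) j := by
      intro j hj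
      simp only [Nat.succ_sub_succ]
    rw [Finset.sum_congr rfl e2, Finset.sum_range_succ
      (fun j => qC q n (j+1) • (x ^ (n+1-(j+1)) * y ^ (j+1))) n,
      qC_of_lt q (Nat.lt_succ_self n), zero_smul, add_zero]
    abel

lemma sub_pow_prim {q : F} {m : ℕ} (hm : 2 ≤ m) (hq : IsPrimitiveRoot q m)
    {x y : R} (hc : y * x = q • (x * y)) :
    (x - y) ^ m = x ^ m + ((-1 : F) ^ m) • y ^ m := by
  rw [sub_pow_expand hc m, Finset.sum_range_succ, qC_diag, Nat.sub_self, pow_zero, one_mul]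
  congr 1
  rw [Finset.sum_eq_single_of_mem 0 (Finset.mem_range.mpr (by omega))]
  · rw [qC_zero, one_smul, Nat.sub_zero, pow_zero, mul_one]
  · intro j hj hj0
    rw [Finset.mem_range] at hj
    rw [qC_eq_zero hm hq (by omega) hj, zero_smul]

end VopAux

namespace VopAux

variable {F : Type*} [Field F] {k t : ℕ} (ζ : F) (P Q : Matrix (Fin k) (Fin k) F)

/-! ### The operators as linear endomorphisms -/

lemma cop_add (a b : Fin t → Matrix (Fin k) (Fin k) F) (i : Fin t) :
    cop Q (a + b) i = cop Q a i + cop Q b i := by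
  unfold cop; split <;> simp [mul_add, add_mul]

lemma cop_smul (r : F) (a : Fin t → Matrix (Fin k) (Fin k) F) (i : Fin t) :
    cop Q (r • a) i = r • cop Q a i := by
  unfold cop; split <;> simp [mul_smul_comm, smul_mul_assoc]

noncomputable def lop : Module.End F (Fin t → Matrix (Fin k) (Fin k) F) where
  toFun a i := ζ ^ (i : ℕ) • (P * a i)
  map_add' a b := by funext i; simp [mul_add, smul_add]
  map_smul' r a := by funext i; simp [mul_smul_comm, smul_comm r]

noncomputable def rop : Module.End F (Fin t → Matrix (Fin k) (Fin k) F) where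
  toFun a i := ζ ^ (i : ℕ) • (cop Q a i * P)
  map_add' a b := by
    funext i
    show ζ ^ (i : ℕ) • (cop Q (a + b) i * P) = _
    rw [cop_add, add_mul, smul_add]
    rfl
  map_smul' r a := by
    funext i
    show ζ ^ (i : ℕ) • (cop Q (r • a) i * P) = _
    rw [cop_smul, smul_mul_assoc, smul_comm]
    rfl

lemma lop_apply (a : Fin t → Matrix (Fin k) (Fin k) F) (i : Fin t) :
    lop ζ P a i = ζ ^ (i : ℕ) • (P * a i) := rfl

lemma rop_apply (a : Fin t → Matrix (Fin k) (Fin k) F) (i : Fin t) :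
    rop ζ P Q a i = ζ ^ (i : ℕ) • (cop Q a i * P) := rfl

lemma vop_eq : vop ζ P Q = ((lop ζ P - rop ζ P Q : Module.End F (Fin t → Matrix (Fin k) (Fin k) F)) : (Fin t → Matrix (Fin k) (Fin k) F) → (Fin t → Matrix (Fin k) (Fin k) F)) := by
  funext a i
  rw [LinearMap.sub_apply, Pi.sub_apply, lop_apply, rop_apply, vop, smul_sub]


/-! ### cop unfolding and iterates -/

lemma cop_zero' (a : Fin t → Matrix (Fin k) (Fin k) F) (i : Fin t) (hi : (i : ℕ) = 0) :
    cop Q a i = Q * a ⟨t - 1, Nat.sub_lt (Nat.lt_of_le_of_lt (Nat.zero_le _) i.2)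
      Nat.one_pos⟩ * Q⁻¹ := by
  unfold cop; rw [if_pos hi]

lemma cop_succ' (a : Fin t → Matrix (Fin k) (Fin k) F) (i : Fin t) (hi : ¬ (i : ℕ) = 0) :
    cop Q a i = a ⟨i.1 - 1, Nat.lt_of_le_of_lt (Nat.sub_le _ _) i.2⟩ := by
  unfold cop; rw [if_neg hi]

lemma cop_iter_le : ∀ n, n ≤ t → ∀ (a : Fin t → Matrix (Fin k) (Fin k) F) (i : Fin t),
    (cop Q)^[n] a i = if h : i.1 < n then Q * a ⟨i.1 + t - n, by omega⟩ * Q⁻¹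
      else a ⟨i.1 - n, by omega⟩ := by
  intro n
  induction n with
  | zero =>
    intro _ a i
    simp
  | succ n ihn =>
    intro hn a i
    rw [Function.iterate_succ_apply']
    by_cases hi : (i : ℕ) = 0
    · rw [cop_zero' _ _ _ hi, ihn (by omega), dif_neg (show ¬ (t - 1 < n) by omega),
        dif_pos (show i.1 < n + 1 by omega)]
      have : t - 1 - n = i.1 + t - (n+1) := by omega
      simp only [this]
    · rw [cop_succ' _ _ _ hi, ihn (by omega)]
      by_cases hii : i.1 < n + 1
      · rw [dif_pos (show i.1 - 1 < n by omega), dif_pos hii]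
        have : i.1 - 1 + t - n = i.1 + t - (n+1) := by omega
        simp only [this]
      · rw [dif_neg (show ¬ (i.1 - 1 < n) by omega), dif_neg hii]
        have : i.1 - 1 - n = i.1 - (n+1) := by omega
        simp only [this]

lemma cop_iter_t (ht : 0 < t) (a : Fin t → Matrix (Fin k) (Fin k) F) (i : Fin t) :
    (cop Q)^[t] a i = Q * a i * Q⁻¹ := by
  rw [cop_iter_le Q t le_rfl, dif_pos i.2]
  have : i.1 + t - t = i.1 := by omega
  simp only [this]

lemma cop_iter_t_mul (ht : 0 < t) :
    ∀ (s : ℕ) (a : Fin t → Matrix (Fin k) (Fin k) F) (i : Fin t),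
      (cop Q)^[t * s] a i = Q ^ s * a i * (Q⁻¹) ^ s := by
  intro s
  induction s with
  | zero => intro a i; simp
  | succ s ihs =>
    intro a i
    rw [show t * (s+1) = t * s + t by ring, Function.iterate_add_apply, ihs,
      cop_iter_t Q ht, pow_succ, pow_succ']
    noncomm_ring

lemma cop_iter_m {m : ℕ} (ht : 0 < t) (htm : t ∣ m) (hQ1 : Q⁻¹ * Q = 1) (hQ2 : Q * Q⁻¹ = 1)
    (hQpow : Q ^ (m / t) = 1) (a : Fin t → Matrix (Fin k) (Fin k) F) (i : Fin t) :
    (cop Q)^[m] a i = a i := by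
  have hcomm : Commute Q⁻¹ Q := by
    show Q⁻¹ * Q = Q * Q⁻¹
    rw [hQ1, hQ2]
  have hQinv : (Q⁻¹) ^ (m / t) = 1 := by
    have h1 : (Q⁻¹) ^ (m/t) * Q ^ (m/t) = 1 := by
      rw [← hcomm.mul_pow, hQ1, one_pow]
    calc (Q⁻¹) ^ (m/t) = (Q⁻¹) ^ (m/t) * Q ^ (m/t) := by rw [hQpow, mul_one]
      _ = 1 := h1
  rw [show m = t * (m / t) from (Nat.mul_div_cancel' htm).symm, cop_iter_t_mul Q ht,
    hQpow, hQinv, one_mul, mul_one]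

/-! ### conjugation by Q -/

lemma conj_mul (hQ1 : Q⁻¹ * Q = 1) (X Y : Matrix (Fin k) (Fin k) F) :
    Q * (X * Y) * Q⁻¹ = (Q * X * Q⁻¹) * (Q * Y * Q⁻¹) := by
  have : Q * X * Q⁻¹ * (Q * Y * Q⁻¹) = Q * X * (Q⁻¹ * Q) * Y * Q⁻¹ := by noncomm_ring
  rw [this, hQ1]
  noncomm_ring

lemma conj_pow (hζ0 : ζ ≠ 0) (hQ1 : Q⁻¹ * Q = 1) (hQ2 : Q * Q⁻¹ = 1)
    (hQP : Q * P * Q⁻¹ = (ζ ^ t)⁻¹ • P) :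
    ∀ n : ℕ, Q * P ^ n * Q⁻¹ = (ζ ^ (-(t * n : ℤ))) • P ^ n := by
  intro n
  induction n with
  | zero => simp [hQ2]
  | succ n ihn =>
    rw [pow_succ, conj_mul Q hQ1, ihn, hQP, smul_mul_assoc,
      mul_smul_comm, smul_smul, ← pow_succ]
    congr 1
    rw [show (ζ ^ t)⁻¹ = ζ ^ (-(t:ℤ)) from by rw [zpow_neg, zpow_natCast],
      ← zpow_add₀ hζ0]
    congr 1
    push_cast
    ring

lemma choose2_succ (n : ℕ) : (((n+1).choose 2 : ℕ) : ℤ) = ((n.choose 2 : ℕ) : ℤ) + n := by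
  rw [show (2:ℕ) = 1 + 1 from rfl, Nat.choose_succ_succ, Nat.choose_one_right]
  push_cast
  ring

/-! ### powers of rop -/

lemma rop_pow (ht : 0 < t) (hζ0 : ζ ≠ 0) (hQ1 : Q⁻¹ * Q = 1) (hQ2 : Q * Q⁻¹ = 1)
    (hQP : Q * P * Q⁻¹ = (ζ ^ t)⁻¹ • P) :
    ∀ (n : ℕ) (a : Fin t → Matrix (Fin k) (Fin k) F) (i : Fin t),
      ((rop ζ P Q) ^ n) a i
        = ζ ^ ((n : ℤ) * (i : ℕ) - ((n.choose 2 : ℕ) : ℤ)) • ((cop Q)^[n] a i * P ^ n) := by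
  intro n
  induction n with
  | zero => intro a i; simp
  | succ n ihn =>
    intro a i
    rw [pow_succ', Module.End.mul_apply, rop_apply, Function.iterate_succ_apply' (cop Q) n a]
    by_cases hi : (i : ℕ) = 0
    · rw [cop_zero' _ _ _ hi, cop_zero' (a := (cop Q)^[n] a) _ _ hi, ihn a]
      simp only [mul_smul_comm, smul_mul_assoc, smul_smul]
      rw [conj_mul Q hQ1 _ (P ^ n), conj_pow ζ P Q hζ0 hQ1 hQ2 hQP n]
      simp only [mul_smul_comm, smul_mul_assoc, smul_smul, Matrix.mul_assoc, pow_succ]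
      congr 1
      simp only [← zpow_natCast ζ, ← zpow_add₀ hζ0]
      congr 1
      rw [choose2_succ, hi, Nat.cast_sub (show 1 ≤ t by omega)]
      push_cast
      ring
    · rw [cop_succ' _ _ _ hi, cop_succ' (a := (cop Q)^[n] a) _ _ hi, ihn a]
      simp only [mul_smul_comm, smul_mul_assoc, smul_smul, Matrix.mul_assoc, pow_succ]
      congr 1
      simp only [← zpow_natCast ζ, ← zpow_add₀ hζ0]
      congr 1
      rw [choose2_succ, Nat.cast_sub (show 1 ≤ i.1 by omega)]
      push_cast
      ring

/-! ### the commutation relation -/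

lemma lr_comm (ht : 0 < t) (hζ0 : ζ ≠ 0) (hQ1 : Q⁻¹ * Q = 1)
    (hQP : Q * P * Q⁻¹ = (ζ ^ t)⁻¹ • P) :
    (rop ζ P Q) * (lop ζ P)
      = ζ⁻¹ • ((lop ζ P) * (rop ζ P Q) : Module.End F (Fin t → Matrix (Fin k) (Fin k) F)) := by
  apply LinearMap.ext
  intro a
  funext i
  rw [Module.End.mul_apply, LinearMap.smul_apply, Module.End.mul_apply, Pi.smul_apply]
  simp only [lop_apply, rop_apply]
  by_cases hi : (i : ℕ) = 0
  · obtain ⟨s, rfl⟩ : ∃ s, t = s + 1 := ⟨t - 1, by omega⟩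
    rw [cop_zero' _ _ _ hi, cop_zero' (a := a) _ _ hi]
    simp only [lop_apply]
    simp only [mul_smul_comm, smul_mul_assoc, smul_smul]
    rw [conj_mul Q hQ1, hQP]
    simp only [Nat.add_sub_cancel, hi, pow_zero, one_smul, mul_smul_comm, smul_mul_assoc,
      smul_smul, Matrix.mul_assoc]
    congr 1
    rw [pow_succ]
    field_simp
    try ring
  · obtain ⟨r, hr⟩ : ∃ r, (i : ℕ) = r + 1 := ⟨(i : ℕ) - 1, by omega⟩
    rw [cop_succ' _ _ _ hi, cop_succ' (a := a) _ _ hi]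
    simp only [lop_apply]
    simp only [mul_smul_comm, smul_mul_assoc, smul_smul, Matrix.mul_assoc, hr,
      Nat.add_sub_cancel]
    congr 1
    rw [pow_succ]
    field_simp
    try ring


lemma zeta_choose {m : ℕ} (hm : 2 ≤ m) (hζ : IsPrimitiveRoot ζ m) :
    ζ ^ (m.choose 2) = (-1 : F) ^ (m - 1) := by
  rcases Nat.even_or_odd m with ⟨s, hs⟩ | ⟨s, hs⟩
  · have hch : m.choose 2 = s * (m - 1) := by
      rw [Nat.choose_two_right, hs, show (s+s) * (s+s-1) = 2 * (s * (s+s-1)) by ring,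
        Nat.mul_div_cancel_left _ (by norm_num : 0 < 2)]
    have hpow : ζ ^ s = -1 := by
      have h2 : ζ ^ s * ζ ^ s = 1 := by rw [← pow_add, ← hs, hζ.pow_eq_one]
      rcases mul_self_eq_one_iff.mp h2 with h | h
      · exact absurd h (hζ.pow_ne_one_of_pos_of_lt (by omega) (by omega))
      · exact h
    rw [hch, pow_mul, hpow]
  · have hch : m.choose 2 = m * s := by
      rw [Nat.choose_two_right, hs, show 2*s+1-1 = 2*s by omega,
        show (2*s+1) * (2*s) = 2*((2*s+1)*s) by ring,
        Nat.mul_div_cancel_left _ (by norm_num : 0 < 2), ← hs]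
    rw [hch, pow_mul, hζ.pow_eq_one, one_pow, show m - 1 = 2*s by omega, pow_mul]
    norm_num

lemma lop_pow : ∀ (n : ℕ) (a : Fin t → Matrix (Fin k) (Fin k) F) (i : Fin t),
    ((lop ζ P) ^ n) a i = ζ ^ (n * (i : ℕ)) • (P ^ n * a i)
  | 0, a, i => by simp
  | n+1, a, i => by
    rw [pow_succ', Module.End.mul_apply, lop_apply, lop_pow n a i, mul_smul_comm,
      smul_smul, ← pow_add, ← mul_assoc, ← pow_succ']
    congr 2
    ring

end VopAux

open VopAux in
/-- `v^m` acts componentwise as the commutator with `P^m`; consequently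
`v^m = 0` if and only if `P^m` is a scalar matrix. -/
theorem vop_pow_m_eq_commutator
    {F : Type*} [Field F] {m : ℕ} (hm : 2 ≤ m) {ζ : F} (hζ : IsPrimitiveRoot ζ m)
    {k t : ℕ} (hk : 0 < k) (ht : 0 < t) (htm : t ∣ m)
    (P Q : Matrix (Fin k) (Fin k) F) (hQu : IsUnit Q)
    (hQpow : Q ^ (m / t) = 1)
    (hQP : Q * P * Q⁻¹ = (ζ ^ t)⁻¹ • P) :
    (∀ (a : Fin t → Matrix (Fin k) (Fin k) F) (i : Fin t),
      (vop ζ P Q)^[m] a i = P ^ m * a i - a i * P ^ m) ∧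
    ((∀ a : Fin t → Matrix (Fin k) (Fin k) F, (vop ζ P Q)^[m] a = 0) ↔
      ∃ α : F, P ^ m = α • (1 : Matrix (Fin k) (Fin k) F)) := by
  classical
  have hζ0 : ζ ≠ 0 := hζ.ne_zero (by omega)
  have hdet : IsUnit Q.det := (Matrix.isUnit_iff_isUnit_det Q).mp hQu
  have hQ1 : Q⁻¹ * Q = 1 := Matrix.nonsing_inv_mul Q hdet
  have hQ2 : Q * Q⁻¹ = 1 := Matrix.mul_nonsing_inv Q hdet
  have hqinv : IsPrimitiveRoot ζ⁻¹ m := hζ.inv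
  have hcomm := lr_comm ζ P Q ht hζ0 hQ1 hQP
  have hpow := sub_pow_prim (R := Module.End F (Fin t → Matrix (Fin k) (Fin k) F))
    hm hqinv hcomm
  have key : ∀ (a : Fin t → Matrix (Fin k) (Fin k) F) (i : Fin t),
      (vop ζ P Q)^[m] a i = P ^ m * a i - a i * P ^ m := by
    intro a i
    have h1 : (vop ζ P Q)^[m] a
        = (((lop ζ P - rop ζ P Q : Module.End F (Fin t → Matrix (Fin k) (Fin k) F))) ^ m) a := by
      rw [vop_eq]
      exact (Module.End.pow_apply _ m a).symm
    rw [h1, hpow]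
    simp only [LinearMap.add_apply, LinearMap.smul_apply, Pi.add_apply, Pi.smul_apply]
    rw [lop_pow, rop_pow ζ P Q ht hζ0 hQ1 hQ2 hQP, cop_iter_m Q ht htm hQ1 hQ2 hQpow,
      pow_mul, hζ.pow_eq_one, one_pow, one_smul]
    have hz : (ζ : F) ^ ((m:ℤ) * ((i:ℕ):ℤ) - ((m.choose 2 : ℕ):ℤ)) = (-1 : F) ^ (m-1) := by
      rw [zpow_sub₀ hζ0]
      have hz1 : (ζ:F) ^ ((m:ℤ) * ((i:ℕ):ℤ)) = 1 := by
        rw [show (m:ℤ) * ((i:ℕ):ℤ) = ((m * (i:ℕ) : ℕ) : ℤ) by push_cast; ring,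
          zpow_natCast, pow_mul, hζ.pow_eq_one, one_pow]
      rw [hz1, zpow_natCast, zeta_choose ζ hm hζ, one_div, ← inv_pow, inv_neg, inv_one]
    rw [hz, smul_smul]
    have hs2 : (-1:F)^m * (-1:F)^(m-1) = -1 := by
      rw [← pow_add, show m + (m-1) = 2*(m-1)+1 by omega, pow_succ, pow_mul]
      norm_num
    rw [hs2]
    simp [sub_eq_add_neg]
  refine ⟨key, ?_, ?_⟩
  · intro h
    have hc : ∀ M : Matrix (Fin k) (Fin k) F, P ^ m * M = M * P ^ m := by
      intro M
      have h0 := congrFun (h (fun _ => M)) ⟨0, ht⟩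
      rw [key] at h0
      simp only [Pi.zero_apply] at h0
      exact sub_eq_zero.mp h0
    obtain ⟨r, hr⟩ := Matrix.mem_range_scalar_of_commute_single
      (M := P ^ m) (fun i j _ => (hc _).symm)
    exact ⟨r, by rw [← hr, Matrix.scalar_apply, ← Matrix.smul_one_eq_diagonal]⟩
  · rintro ⟨α, hα⟩ a
    funext i
    rw [key, hα]
    simp [smul_mul_assoc, mul_smul_comm]
end

section
/- Let F be a field, m ≥ 2, ζ ∈ F a primitive m-th root of unity, and let B be a unital ℤ_m-graded F-algebra that is graded-simple, with associated automorphism c_B. Let A(B) be the F-vector space B^m of tuples x = (x_0, …, x_{m−1}) with multiplication (x·y)_n := Σ_{k+ℓ=n, 0 ≤ k, ℓ ≤ m−1} binom(n,k)_ζ·(c_B^ℓ x_k)·y_ℓ for 0 ≤ n ≤ m−1, and with F-linear maps c, v : A(B) → A(B) given by (c x)_k := ζ^k·c_B(x_k) for all k and (v x)_k := x_{k+1} for 0 ≤ k ≤ m−2, (v x)_{m−1} := 0. Then A(B) is an associative unital F-algebra, c is an algebra automorphism of A(B) with c^m = id, v(xy) = (c x)(v y) + (v x)y and v(c x) = ζ·c(v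 x) for all x, y ∈ A(B), v^m = 0, and the only two-sided ideals I of A(B) with c(I) ⊆ I and v(I) ⊆ I are 0 and A(B); that is, (c, v) makes A(B) an H_{m²}(ζ)-simple algebra. -/
/-- The multiplication on `A(B) = B^m`:
`(x · y)_n = Σ_{k+ℓ=n, 0 ≤ k,ℓ ≤ m−1} binom(n,k)_ζ (c_B^ℓ x_k) y_ℓ`. -/
def mulA {F B : Type*} [Field F] [Ring B] [Algebra F B] {m : ℕ}
    (ζ : F) (cB : B →ₗ[F] B) (x y : Fin m → B) (n : Fin m) : B :=
  ∑ j : Fin (n.1 + 1),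
    qbinom ζ n.1 j.1 •
      ((cB ^ (n.1 - j.1)) (x ⟨j.1, lt_of_le_of_lt (Nat.le_of_lt_succ j.2) n.2⟩) *
        y ⟨n.1 - j.1, lt_of_le_of_lt (Nat.sub_le _ _) n.2⟩)

/-- The map `c` on `A(B) = B^m`: `(c x)_k = ζ^k c_B(x_k)`. -/
def cA {F B : Type*} [Field F] [Ring B] [Algebra F B] {m : ℕ}
    (ζ : F) (cB : B →ₗ[F] B) (x : Fin m → B) (n : Fin m) : B :=
  ζ ^ n.1 • cB (x n)

/-- The map `v` on `A(B) = B^m`: `(v x)_k = x_{k+1}` for `k ≤ m−2` and `(v x)_{m−1} = 0`. -/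
def vA {B : Type*} [Ring B] {m : ℕ} (x : Fin m → B) (n : Fin m) : B :=
  if h : n.1 + 1 < m then x ⟨n.1 + 1, h⟩ else 0

namespace TaftProof
open Finset
variable {F : Type*} [Field F]

lemma qbinom_zero (q : F) (n : ℕ) : qbinom q n 0 = 1 := by cases n <;> rfl

lemma qbinom_succ (q : F) (n k : ℕ) :
    qbinom q (n+1) (k+1) = q ^ (k+1) * qbinom q n (k+1) + qbinom q n k := rfl

lemma qbinom_eq_zero (q : F) (n k : ℕ) (h : n < k) : qbinom q n k = 0 := by
  induction n generalizing k with
  | zero => cases k with | zero => omega | succ k => rfl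
  | succ n ih =>
    cases k with
    | zero => omega
    | succ k => rw [qbinom_succ, ih k (by omega), ih (k+1) (by omega)]; ring

lemma qbinom_self (q : F) (n : ℕ) : qbinom q n n = 1 := by
  induction n with
  | zero => rfl
  | succ n ih => rw [qbinom_succ, ih, qbinom_eq_zero q n (n+1) (by omega)]; ring

lemma claimD (q : F) : ∀ p : ℕ, ∀ k ≤ p+1,
    (∑ i ∈ range (p+1-k), q^i) * qbinom q (p+1) k
      = (∑ i ∈ range (p+1), q^i) * qbinom q p k := by
  intro p
  induction p with
  | zero =>
    intro k hk
    interval_cases k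
    · simp [qbinom_zero]
    · simp [qbinom_self, qbinom_eq_zero q 0 1 (by omega)]
  | succ p ih =>
    intro k hk
    rcases Nat.eq_zero_or_pos k with rfl | hk0
    · simp [qbinom_zero]
    rcases eq_or_lt_of_le hk with rfl | hklt
    · rw [Nat.sub_self]
      simp [qbinom_eq_zero q (p+1) (p+2) (by omega)]
    obtain ⟨j, rfl⟩ : ∃ j, k = j + 1 := ⟨k-1, by omega⟩
    have hj : j ≤ p := by omega
    have h1 : p + 1 + 1 - (j+1) = (p - j) + 1 := by omega
    have h2 : p + 1 - (j+1) = p - j := by omega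
    rw [h1, qbinom_succ q (p+1) j, Finset.sum_range_succ (fun i => q^i) (p-j),
      Finset.sum_range_succ (fun i => q^i) (p+1)]
    have e1 := ih (j+1) (by omega)
    have e2 := ih j (by omega)
    rw [h2] at e1
    have h3 : p + 1 - j = (p - j) + 1 := by omega
    rw [h3, Finset.sum_range_succ (fun i => q^i) (p-j)] at e2
    have hpow : q ^ (p - j) * q ^ (j+1) = q ^ (p+1) := by
      rw [← pow_add]; congr 1; omega
    have e3 := qbinom_succ q p j
    linear_combination (q^(j+1)) * e1 + e2 + (qbinom q (p+1) (j+1)) * hpow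
      - (∑ i ∈ range (p+1), q^i) * e3

lemma qbinom_root_zero {m : ℕ} (hm : 2 ≤ m) {ζ : F} (hζ : IsPrimitiveRoot ζ m)
    (k : ℕ) (h1 : 0 < k) (h2 : k < m) : qbinom ζ m k = 0 := by
  have hz1 : ζ ≠ 1 := hζ.ne_one (by omega)
  have hgm : (∑ i ∈ range m, ζ^i) = 0 := by
    have := geom_sum_mul ζ m
    rw [hζ.pow_eq_one, sub_self] at this
    rcases mul_eq_zero.mp this with h | h
    · exact h
    · exact absurd (sub_eq_zero.mp h) hz1
  have hgd : (∑ i ∈ range (m - k), ζ^i) ≠ 0 := by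
    intro h
    have := geom_sum_mul ζ (m - k)
    rw [h, zero_mul] at this
    have hpow : ζ ^ (m - k) = 1 := sub_eq_zero.mp this.symm
    exact hζ.pow_ne_one_of_pos_of_lt (by omega) (by omega) hpow
  obtain ⟨p, rfl⟩ : ∃ p, m = p + 1 := ⟨m - 1, by omega⟩
  have := claimD ζ p k (by omega)
  rw [hgm, zero_mul] at this
  rcases mul_eq_zero.mp this with h | h
  · exact absurd h hgd
  · exact h

lemma trinom (q : F) : ∀ (N a b c : ℕ), a+b+c = N →
    qbinom q (a+b+c) (a+b) * qbinom q (a+b) a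
      = qbinom q (a+b+c) a * qbinom q (b+c) b := by
  intro N
  induction N using Nat.strong_induction_on with
  | _ N ih =>
    intro a b c hsum
    match a, b, c with
    | 0, b, c => simp [qbinom_zero]
    | a+1, 0, c => simp [qbinom_self, qbinom_zero]
    | a+1, b+1, 0 =>
      simp only [Nat.add_zero, qbinom_self, one_mul, mul_one]
    | A+1, B+1, C+1 => ?_
    set a := A+1 with ha
    set b := B+1 with hb
    set c := C+1 with hc
    set n := a + b + C with hn
    have hNn : n < N := by omega
    have e1 : qbinom q n (a+b) * qbinom q (a+b) a = qbinom q n a * qbinom q (b+C) b := by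
      have := ih n hNn a b C rfl
      rwa [show b + C = b + C from rfl] at this
    have e2 : qbinom q n (a+B) * qbinom q (a+B) a = qbinom q n a * qbinom q (b+C) B := by
      have := ih n hNn a B c (by omega)
      rwa [show a+B+c = n from by omega, show B + c = b + C from by omega] at this
    have e3 : qbinom q n (a+B) * qbinom q (a+B) A = qbinom q n A * qbinom q (b+c) b := by
      have := ih n hNn A b c (by omega)
      rwa [show A+b+c = n from by omega, show A + b = a + B from by omega] at this
    have x1 : qbinom q (a+b+c) (a+b) = q^(a+b) * qbinom q n (a+b) + qbinom q n (a+B) := by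
      rw [show a+b+c = n+1 from by omega, show a+b = (a+B)+1 from by omega, qbinom_succ,
        show a+B+1 = a+b from by omega]
    have x2 : qbinom q (a+b) a = q^a * qbinom q (a+B) a + qbinom q (a+B) A := by
      rw [show a+b = (a+B)+1 from by omega, show a = A+1 from rfl, qbinom_succ,
        show A+1 = a from rfl]
    have x3 : qbinom q (a+b+c) a = q^a * qbinom q n a + qbinom q n A := by
      rw [show a+b+c = n+1 from by omega, show a = A+1 from rfl, qbinom_succ,
        show A+1 = a from rfl]
    have x4 : qbinom q (b+c) b = q^b * qbinom q (b+C) b + qbinom q (b+C) B := by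
      rw [show b+c = (b+C)+1 from by omega, show b = B+1 from rfl, qbinom_succ,
        show B+1 = b from rfl]
    have hpow : q^(a+b) = q^a * q^b := by rw [← pow_add]
    rw [x1, x2, x3, x4]
    linear_combination (q^(a+b)) * e1 + (q^a) * e2 + e3
      - (q^(a+b) * qbinom q n (a+b)) * x2
      + (qbinom q n a * qbinom q (b+C) b) * hpow
      + (qbinom q n A) * x4

end TaftProof
namespace TaftProof
open Finset DirectSum
section Graded
variable {F B : Type*} [Field F] [Ring B] [Algebra F B]
  {m : ℕ} {ζ : F}
  {ℬ : ZMod m → Submodule F B} [DirectSum.Decomposition ℬ]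

/-- the degree-`i` projection -/
noncomputable def π (ℬ : ZMod m → Submodule F B) [DirectSum.Decomposition ℬ] (i : ZMod m)
    (x : B) : B := (DirectSum.decompose ℬ x i : B)

lemma π_mem (i : ZMod m) (x : B) : π ℬ i x ∈ ℬ i := (DirectSum.decompose ℬ x i).2

lemma π_same {i : ZMod m} {x : B} (hx : x ∈ ℬ i) : π ℬ i x = x :=
  DirectSum.decompose_of_mem_same ℬ hx

lemma π_ne {i j : ZMod m} {x : B} (hx : x ∈ ℬ i) (h : i ≠ j) : π ℬ j x = 0 :=
  DirectSum.decompose_of_mem_ne ℬ hx h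

lemma π_sum {ι : Type*} (s : Finset ι) (f : ι → B) (i : ZMod m) :
    π ℬ i (∑ j ∈ s, f j) = ∑ j ∈ s, π ℬ i (f j) := by
  unfold π
  rw [DirectSum.decompose_sum]
  rw [DFinsupp.finset_sum_apply]
  push_cast
  rfl

lemma π_smul (s : F) (x : B) (i : ZMod m) : π ℬ i (s • x) = s • π ℬ i x := by
  unfold π
  rw [DirectSum.decompose_smul]
  rfl

lemma sum_π [NeZero m] (x : B) : ∑ i : ZMod m, π ℬ i x = x := by
  have h := DirectSum.sum_univ_of (DirectSum.decompose ℬ x)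
  have h2 := congrArg (DirectSum.coeAddMonoidHom ℬ) h
  rw [map_sum] at h2
  have h3 : (DirectSum.coeAddMonoidHom ℬ) ((DirectSum.decompose ℬ) x) = x :=
    (DirectSum.decompose ℬ).symm_apply_apply x
  rw [h3] at h2
  simpa [π, DirectSum.coeAddMonoidHom_of] using h2

lemma indB (p : B → Prop) (h0 : p 0) (hadd : ∀ x y, p x → p y → p (x + y))
    (hhom : ∀ (i : ZMod m), ∀ x ∈ ℬ i, p x) : ∀ x, p x :=
  DirectSum.Decomposition.inductionOn ℬ h0 (fun {i} mm => hhom i mm.1 mm.2) hadd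

lemma zeta_pow_mod (hζ : IsPrimitiveRoot ζ m) (a : ℕ) : ζ ^ (a % m) = ζ ^ a := by
  conv_rhs => rw [← Nat.div_add_mod a m]
  rw [pow_add, pow_mul, hζ.pow_eq_one, one_pow, one_mul]

lemma cB_mul [NeZero m] (hζ : IsPrimitiveRoot ζ m)
    (hgmul : ∀ (i j : ZMod m), ∀ x ∈ ℬ i, ∀ y ∈ ℬ j, x * y ∈ ℬ (i + j))
    {cB : B →ₗ[F] B} (hcB : ∀ i : ZMod m, ∀ b ∈ ℬ i, cB b = ζ ^ i.val • b) :
    ∀ x y : B, cB (x * y) = cB x * cB y := by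
  have key : ∀ (i j : ZMod m), ∀ x ∈ ℬ i, ∀ y ∈ ℬ j, cB (x * y) = cB x * cB y := by
    intro i j x hx y hy
    rw [hcB i x hx, hcB j y hy, hcB (i+j) _ (hgmul i j x hx y hy), smul_mul_assoc,
      mul_smul_comm, smul_smul, ← pow_add, ZMod.val_add, zeta_pow_mod hζ]
  intro x
  induction x using indB (ℬ := ℬ) with
  | h0 => intro y; simp
  | hadd x x' hx hx' => intro y; rw [add_mul, map_add, hx, hx', map_add, add_mul]
  | hhom i x hx =>
    intro y
    induction y using indB (ℬ := ℬ) with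
    | h0 => simp
    | hadd y y' hy hy' => rw [mul_add, map_add, hy, hy', map_add, mul_add]
    | hhom j y hy => exact key i j x hx y hy

lemma one_mem_deg_zero [NeZero m]
    (hgmul : ∀ (i j : ZMod m), ∀ x ∈ ℬ i, ∀ y ∈ ℬ j, x * y ∈ ℬ (i + j)) :
    (1 : B) ∈ ℬ 0 := by
  have hmem : ∀ i : ZMod m, π ℬ i (1:B) ∈ ℬ i := fun i => π_mem i 1
  have hstep : ∀ (j : ZMod m), ∀ x ∈ ℬ j, ∀ i0 : ZMod m,
      x * π ℬ i0 (1:B) = if i0 = 0 then x else 0 := by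
    intro j x hx i0
    have hx1 : x = ∑ i : ZMod m, x * π ℬ i (1:B) := by
      rw [← Finset.mul_sum, sum_π, mul_one]
    have h2 := congrArg (π ℬ (j + i0)) hx1
    rw [π_sum] at h2
    have h3 : ∀ i : ZMod m, π ℬ (j + i0) (x * π ℬ i (1:B)) = if i = i0 then x * π ℬ i (1:B) else 0 := by
      intro i
      by_cases h : i = i0
      · subst h; rw [if_pos rfl, π_same (hgmul j i x hx _ (hmem i))]
      · rw [if_neg h]
        exact π_ne (hgmul j i x hx _ (hmem i)) (fun hc => h (add_left_cancel hc))
    rw [Finset.sum_congr rfl (fun i _ => h3 i)] at h2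
    simp only [Finset.sum_ite_eq', Finset.mem_univ, if_true] at h2
    by_cases h : i0 = 0
    · subst h
      rw [if_pos rfl, ← h2, add_zero, π_same hx]
    · rw [if_neg h, ← h2]
      exact π_ne hx (fun hc => h (left_eq_add.mp hc))
  have hui : ∀ i : ZMod m, π ℬ i (1:B) = if i = 0 then (1:B) else 0 := by
    intro i
    have h1 : π ℬ i (1:B) = ∑ j : ZMod m, π ℬ j (1:B) * π ℬ i (1:B) := by
      rw [← Finset.sum_mul, sum_π, one_mul]
    rw [h1, Finset.sum_congr rfl (fun j _ => hstep j (π ℬ j (1:B)) (hmem j) i)]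
    by_cases h : i = 0
    · subst h; simp only [if_pos rfl]; exact sum_π 1
    · simp [h]
  have hfin : (1 : B) = π ℬ 0 (1:B) := by
    conv_lhs => rw [← sum_π (ℬ := ℬ) (1 : B)]
    refine Finset.sum_eq_single 0 (fun j _ hj => ?_) (fun h => absurd (Finset.mem_univ 0) h)
    rw [hui j, if_neg hj]
  rw [hfin]
  exact hmem 0

lemma cB_pow_hom (hζ : IsPrimitiveRoot ζ m)
    {cB : B →ₗ[F] B} (hcB : ∀ i : ZMod m, ∀ b ∈ ℬ i, cB b = ζ ^ i.val • b) :
    ∀ (t : ℕ) (i : ZMod m), ∀ x ∈ ℬ i, (cB^t) x = ζ^(i.val*t) • x := by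
  intro t
  induction t with
  | zero => intro i x hx; simp
  | succ t ih =>
    intro i x hx
    rw [pow_succ, Module.End.mul_apply, hcB i x hx, map_smul, ih i x hx, smul_smul,
      ← pow_add]
    congr 1
    ring

lemma cB_pow_mul [NeZero m] (hζ : IsPrimitiveRoot ζ m)
    (hgmul : ∀ (i j : ZMod m), ∀ x ∈ ℬ i, ∀ y ∈ ℬ j, x * y ∈ ℬ (i + j))
    {cB : B →ₗ[F] B} (hcB : ∀ i : ZMod m, ∀ b ∈ ℬ i, cB b = ζ ^ i.val • b) :
    ∀ (t : ℕ) (x y : B), (cB^t) (x * y) = (cB^t) x * (cB^t) y := by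
  intro t
  induction t with
  | zero => intro x y; simp
  | succ t ih =>
    intro x y
    rw [pow_succ, Module.End.mul_apply, Module.End.mul_apply, Module.End.mul_apply,
      cB_mul hζ hgmul hcB, ih]

lemma cB_pow_one [NeZero m] (hζ : IsPrimitiveRoot ζ m)
    (hgmul : ∀ (i j : ZMod m), ∀ x ∈ ℬ i, ∀ y ∈ ℬ j, x * y ∈ ℬ (i + j))
    {cB : B →ₗ[F] B} (hcB : ∀ i : ZMod m, ∀ b ∈ ℬ i, cB b = ζ ^ i.val • b) :
    ∀ (t : ℕ), (cB^t) (1 : B) = 1 := by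
  intro t
  rw [cB_pow_hom hζ hcB t 0 1 (one_mem_deg_zero hgmul), ZMod.val_zero, zero_mul, pow_zero,
    one_smul]

lemma cB_pow_m [NeZero m] (hζ : IsPrimitiveRoot ζ m)
    {cB : B →ₗ[F] B} (hcB : ∀ i : ZMod m, ∀ b ∈ ℬ i, cB b = ζ ^ i.val • b) :
    ∀ x : B, (cB^m) x = x := by
  intro x
  induction x using indB (ℬ := ℬ) with
  | h0 => simp
  | hadd x y hx hy => rw [map_add, hx, hy]
  | hhom i x hx =>
    rw [cB_pow_hom hζ hcB m i x hx, mul_comm, pow_mul, hζ.pow_eq_one, one_pow, one_smul]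

lemma cB_iter_eq (hζ : IsPrimitiveRoot ζ m) [NeZero m]
    {cB : B →ₗ[F] B} (hcB : ∀ i : ZMod m, ∀ b ∈ ℬ i, cB b = ζ ^ i.val • b)
    (t : ℕ) (x : B) : (cB^t) x = ∑ j : ZMod m, ζ^(j.val*t) • π ℬ j x := by
  conv_lhs => rw [← sum_π (ℬ := ℬ) x]
  rw [map_sum]
  exact Finset.sum_congr rfl fun j _ => cB_pow_hom hζ hcB t j _ (π_mem j x)

lemma π_mem_of_stable [NeZero m] (hζ : IsPrimitiveRoot ζ m)
    {cB : B →ₗ[F] B} (hcB : ∀ i : ZMod m, ∀ b ∈ ℬ i, cB b = ζ ^ i.val • b)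
    (J : Submodule F B) (hJ : ∀ x ∈ J, cB x ∈ J) {x : B} (hx : x ∈ J) (i : ZMod m) :
    π ℬ i x ∈ J := by
  have hmF : ((m:ℕ) : F) ≠ 0 := (hζ.neZero').out
  have hJt : ∀ t : ℕ, (cB^t) x ∈ J := by
    intro t
    induction t with
    | zero => simpa using hx
    | succ t ih => rw [pow_succ', Module.End.mul_apply]; exact hJ _ ih
  have hgeom : ∀ j : ZMod m, (∑ t ∈ Finset.range m, (ζ^(m - i.val + j.val))^t)
      = if j = i then ((m:ℕ) : F) else 0 := by
    intro j
    by_cases h : j = i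
    · subst h
      rw [if_pos rfl, show m - j.val + j.val = m from by have := ZMod.val_lt j; omega,
        hζ.pow_eq_one]
      simp
    · rw [if_neg h]
      set w : F := ζ^(m - i.val + j.val) with hw
      have hw1 : w ≠ 1 := by
        intro hc
        have hdvd := hζ.dvd_of_pow_eq_one _ hc
        have hi := ZMod.val_lt i
        have hj := ZMod.val_lt j
        have hml : m ≤ m - i.val + j.val := Nat.le_of_dvd (by omega) hdvd
        have hsub : m ∣ (m - i.val + j.val - m) := Nat.dvd_sub hdvd (dvd_refl m)
        have hz : m - i.val + j.val - m = 0 :=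
          Nat.eq_zero_of_dvd_of_lt hsub (by omega)
        have : m - i.val + j.val = m := by omega
        have : j.val = i.val := by omega
        exact h (ZMod.val_injective _ this)
      have hwm : w ^ m = 1 := by
        rw [hw, ← pow_mul, mul_comm, pow_mul, hζ.pow_eq_one, one_pow]
      have := geom_sum_mul w m
      rw [hwm, sub_self] at this
      rcases mul_eq_zero.mp this with h2 | h2
      · exact h2
      · exact absurd (sub_eq_zero.mp h2) hw1
  have key : ∑ t ∈ Finset.range m, ζ^((m - i.val)*t) • (cB^t) x = ((m:ℕ):F) • π ℬ i x := by
    calc ∑ t ∈ Finset.range m, ζ^((m - i.val)*t) • (cB^t) x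
        = ∑ t ∈ Finset.range m, ∑ j : ZMod m, (ζ^(m - i.val + j.val))^t • π ℬ j x := by
          refine Finset.sum_congr rfl fun t _ => ?_
          rw [cB_iter_eq hζ hcB, Finset.smul_sum]
          refine Finset.sum_congr rfl fun j _ => ?_
          rw [smul_smul, ← pow_add, ← pow_mul]
          congr 2
          ring
      _ = ∑ j : ZMod m, (∑ t ∈ Finset.range m, (ζ^(m - i.val + j.val))^t) • π ℬ j x := by
          rw [Finset.sum_comm]
          exact Finset.sum_congr rfl fun j _ => (Finset.sum_smul).symm
      _ = ∑ j : ZMod m, (if j = i then ((m:ℕ):F) else 0) • π ℬ j x := by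
          exact Finset.sum_congr rfl fun j _ => by rw [hgeom j]
      _ = ((m:ℕ):F) • π ℬ i x := by
          rw [Finset.sum_congr rfl (fun j _ => by
            rw [ite_smul, zero_smul] : ∀ j ∈ Finset.univ, (if j = i then ((m:ℕ):F) else 0) • π ℬ j x
              = if j = i then ((m:ℕ):F) • π ℬ j x else 0)]
          simp
  have : π ℬ i x = ((m:ℕ):F)⁻¹ • ∑ t ∈ Finset.range m, ζ^((m - i.val)*t) • (cB^t) x := by
    rw [key, smul_smul, inv_mul_cancel₀ hmF, one_smul]
  rw [this]
  exact Submodule.smul_mem _ _ (Submodule.sum_mem _ fun t _ => Submodule.smul_mem _ _ (hJt t))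

end Graded
end TaftProof
namespace TaftProof
section AB
open Finset
variable {F B : Type*} [Field F] [Ring B] [Algebra F B] {m : ℕ}

def Xe (x : Fin m → B) (j : ℕ) : B := if h : j < m then x ⟨j, h⟩ else 0

lemma Xe_add (x y : Fin m → B) (j : ℕ) : Xe (x + y) j = Xe x j + Xe y j := by
  unfold Xe; split
  · rfl
  · rw [add_zero]

lemma Xe_smul (s : F) (x : Fin m → B) (j : ℕ) : Xe (s • x) j = s • Xe x j := by
  unfold Xe; split
  · rfl
  · rw [smul_zero]

lemma Xe_vA (x : Fin m → B) (j : ℕ) : Xe (vA x) j = Xe x (j+1) := by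
  unfold Xe vA
  by_cases h : j < m
  · rw [dif_pos h]
  · rw [dif_neg h, dif_neg (by omega)]

variable (ζ : F) (cB : B →ₗ[F] B)

lemma Xe_cA (x : Fin m → B) (j : ℕ) : Xe (cA ζ cB x) j = ζ^j • cB (Xe x j) := by
  unfold Xe cA
  by_cases h : j < m
  · rw [dif_pos h, dif_pos h]
  · rw [dif_neg h, dif_neg h, map_zero, smul_zero]

/-- `S x y n` : the `n`-th component of the product, for arbitrary `n : ℕ`. -/
def S (x y : Fin m → B) (n : ℕ) : B :=
  ∑ j ∈ Finset.range (n+1), qbinom ζ n j • ((cB ^ (n - j)) (Xe x j) * Xe y (n - j))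

lemma mulA_eq (x y : Fin m → B) (n : Fin m) : mulA ζ cB x y n = S ζ cB x y n.1 := by
  unfold mulA S
  rw [← Fin.sum_univ_eq_sum_range (fun j =>
    qbinom ζ n.1 j • ((cB ^ (n.1 - j)) (Xe x j) * Xe y (n.1 - j))) (n.1+1)]
  refine Finset.sum_congr rfl fun j _ => ?_
  unfold Xe
  rw [dif_pos (lt_of_le_of_lt (Nat.le_of_lt_succ j.2) n.2),
    dif_pos (lt_of_le_of_lt (Nat.sub_le _ _) n.2)]

lemma Xe_mulA (x y : Fin m → B) (j : ℕ) (hj : j < m) :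
    Xe (mulA ζ cB x y) j = S ζ cB x y j := by
  unfold Xe
  rw [dif_pos hj]
  exact mulA_eq ζ cB x y ⟨j, hj⟩

lemma mulA_add_left (x y z : Fin m → B) :
    mulA ζ cB (x + y) z = mulA ζ cB x z + mulA ζ cB y z := by
  funext n
  rw [Pi.add_apply, mulA_eq, mulA_eq, mulA_eq]
  unfold S
  rw [← Finset.sum_add_distrib]
  refine Finset.sum_congr rfl fun j _ => ?_
  rw [Xe_add, map_add, add_mul, smul_add]

lemma mulA_add_right (x y z : Fin m → B) :
    mulA ζ cB z (x + y) = mulA ζ cB z x + mulA ζ cB z y := by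
  funext n
  rw [Pi.add_apply, mulA_eq, mulA_eq, mulA_eq]
  unfold S
  rw [← Finset.sum_add_distrib]
  refine Finset.sum_congr rfl fun j _ => ?_
  rw [Xe_add, mul_add, smul_add]

lemma mulA_smul_left (s : F) (x y : Fin m → B) :
    mulA ζ cB (s • x) y = s • mulA ζ cB x y := by
  funext n
  rw [Pi.smul_apply, mulA_eq, mulA_eq]
  unfold S
  rw [Finset.smul_sum]
  refine Finset.sum_congr rfl fun j _ => ?_
  rw [Xe_smul, map_smul, smul_mul_assoc, smul_comm]

lemma mulA_smul_right (s : F) (x y : Fin m → B) :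
    mulA ζ cB x (s • y) = s • mulA ζ cB x y := by
  funext n
  rw [Pi.smul_apply, mulA_eq, mulA_eq]
  unfold S
  rw [Finset.smul_sum]
  refine Finset.sum_congr rfl fun j _ => ?_
  rw [Xe_smul, mul_smul_comm, smul_comm]

/-- the embedding of `B` in degree `0` -/
def ιA (b : B) : Fin m → B := fun k => if k.1 = 0 then b else 0

lemma Xe_ιA (hm : 1 ≤ m) (b : B) (j : ℕ) : Xe (ιA (m := m) b) j = if j = 0 then b else 0 := by
  unfold Xe ιA
  by_cases h : j < m
  · rw [dif_pos h]
  · rw [dif_neg h, if_neg (by omega)]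

lemma mulA_unit_left (hm : 1 ≤ m) (hpow1 : ∀ t : ℕ, (cB^t) (1:B) = 1) (x : Fin m → B) :
    mulA ζ cB (ιA (m := m) 1) x = x := by
  funext n
  rw [mulA_eq]
  unfold S
  rw [Finset.sum_eq_single 0 (fun j _ hj => by
      rw [Xe_ιA hm, if_neg hj, map_zero, zero_mul, smul_zero])
    (fun h => absurd (Finset.mem_range.mpr (by omega)) h)]
  rw [Xe_ιA hm, if_pos rfl, hpow1, qbinom_zero, one_smul, one_mul, Nat.sub_zero]
  unfold Xe
  rw [dif_pos n.2]

lemma mulA_unit_right (hm : 1 ≤ m) (x : Fin m → B) :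
    mulA ζ cB x (ιA (m := m) 1) = x := by
  funext n
  rw [mulA_eq]
  unfold S
  rw [Finset.sum_eq_single n.1 (fun j hj hjn => by
      rw [Xe_ιA hm, if_neg (by rw [Finset.mem_range] at hj; omega), mul_zero, smul_zero])
    (fun h => absurd (Finset.mem_range.mpr (by omega)) h)]
  rw [Xe_ιA hm, if_pos (Nat.sub_self n.1), Nat.sub_self, pow_zero, Module.End.one_apply,
    mul_one, qbinom_self, one_smul]
  unfold Xe
  rw [dif_pos n.2]

end AB
end TaftProof
namespace TaftProof
section AB2
open Finset
variable {F B : Type*} [Field F] [Ring B] [Algebra F B] {m : ℕ}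
variable (ζ : F) (cB : B →ₗ[F] B)

lemma assocA (hpm : ∀ (t : ℕ) (u v : B), (cB^t) (u*v) = (cB^t) u * (cB^t) v)
    (x y z : Fin m → B) :
    mulA ζ cB (mulA ζ cB x y) z = mulA ζ cB x (mulA ζ cB y z) := by
  funext n
  rw [mulA_eq, mulA_eq]
  have hL : S ζ cB (mulA ζ cB x y) z n.1
      = ∑ j ∈ range (n.1+1), ∑ i ∈ range (j+1),
        (qbinom ζ n.1 j * qbinom ζ j i) •
          (((cB^(n.1-i)) (Xe x i) * (cB^(n.1-j)) (Xe y (j-i))) * Xe z (n.1-j)) := by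
    unfold S
    refine Finset.sum_congr rfl fun j hj => ?_
    have hjn : j ≤ n.1 := by rw [Finset.mem_range] at hj; omega
    rw [Xe_mulA ζ cB x y j (lt_of_le_of_lt hjn n.2)]
    unfold S
    rw [map_sum, Finset.sum_mul, Finset.smul_sum]
    refine Finset.sum_congr rfl fun i hi => ?_
    have hij : i ≤ j := by rw [Finset.mem_range] at hi; omega
    rw [map_smul, hpm, smul_mul_assoc, smul_smul, ← Module.End.mul_apply, ← pow_add,
      show n.1 - j + (j - i) = n.1 - i from by omega]
  have hR : S ζ cB x (mulA ζ cB y z) n.1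
      = ∑ i ∈ range (n.1+1), ∑ s ∈ range (n.1-i+1),
        (qbinom ζ n.1 i * qbinom ζ (n.1-i) s) •
          ((cB^(n.1-i)) (Xe x i) * ((cB^(n.1-i-s)) (Xe y s) * Xe z (n.1-i-s))) := by
    unfold S
    refine Finset.sum_congr rfl fun i hi => ?_
    have hin : i ≤ n.1 := by rw [Finset.mem_range] at hi; omega
    rw [Xe_mulA ζ cB y z (n.1-i) (lt_of_le_of_lt (Nat.sub_le _ _) n.2)]
    unfold S
    rw [Finset.mul_sum, Finset.smul_sum]
    refine Finset.sum_congr rfl fun s hs => ?_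
    rw [mul_smul_comm, smul_smul]
  rw [hL, hR]
  rw [Finset.sum_comm' (s' := fun i => Finset.Ico i (n.1+1)) (t' := range (n.1+1))
    (fun j i => by simp only [Finset.mem_range, Finset.mem_Ico]; omega)]
  refine Finset.sum_congr rfl fun i hi => ?_
  have hin : i ≤ n.1 := by rw [Finset.mem_range] at hi; omega
  rw [Finset.sum_Ico_eq_sum_range, show n.1 + 1 - i = n.1 - i + 1 from by omega]
  refine Finset.sum_congr rfl fun s hs => ?_
  have hsn : s ≤ n.1 - i := by rw [Finset.mem_range] at hs; omega
  have htri := trinom ζ (n.1) i s (n.1-i-s) (by omega)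
  rw [show i + s + (n.1-i-s) = n.1 from by omega, show s + (n.1-i-s) = n.1 - i from by omega]
    at htri
  rw [show i + s - i = s from by omega, show n.1 - (i+s) = n.1 - i - s from by omega,
    htri, mul_assoc]

end AB2
end TaftProof
namespace TaftProof
section AB3
open Finset
variable {F B : Type*} [Field F] [Ring B] [Algebra F B] {m : ℕ}
variable (ζ : F) (cB : B →ₗ[F] B)

lemma S_succ (x y : Fin m → B) (n : ℕ) :
    S ζ cB x y (n+1)
      = (∑ j ∈ range (n+1), (ζ^j * qbinom ζ n j) • ((cB^(n+1-j)) (Xe x j) * Xe y (n+1-j)))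
        + S ζ cB (vA x) y n := by
  unfold S
  rw [Finset.sum_range_succ'
      (fun j => qbinom ζ (n+1) j • ((cB^(n+1-j)) (Xe x j) * Xe y (n+1-j))) (n+1),
    Finset.sum_range_succ'
      (fun j => (ζ^j * qbinom ζ n j) • ((cB^(n+1-j)) (Xe x j) * Xe y (n+1-j))) n]
  simp only [Nat.succ_sub_succ_eq_sub, Nat.sub_zero, qbinom_succ, qbinom_zero, pow_zero,
    one_mul, one_smul, add_smul, Finset.sum_add_distrib, Xe_vA]
  rw [Finset.sum_range_succ
    (fun j => (ζ^(j+1) * qbinom ζ n (j+1)) • ((cB^(n-j)) (Xe x (j+1)) * Xe y (n-j))) n,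
    qbinom_eq_zero ζ n (n+1) (by omega), mul_zero, zero_smul, add_zero]
  abel

lemma S_cA_vA (x y : Fin m → B) (n : Fin m) :
    S ζ cB (cA ζ cB x) (vA y) n.1
      = ∑ j ∈ range (n.1+1),
          (ζ^j * qbinom ζ n.1 j) • ((cB^(n.1+1-j)) (Xe x j) * Xe y (n.1+1-j)) := by
  unfold S
  refine Finset.sum_congr rfl fun j hj => ?_
  have hjn : j ≤ n.1 := by rw [Finset.mem_range] at hj; omega
  rw [Xe_cA, Xe_vA, map_smul, smul_mul_assoc, smul_smul,
    show ∀ u, (cB^(n.1-j)) (cB u) = (cB^(n.1-j+1)) u from fun u => by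
      rw [pow_succ, Module.End.mul_apply]]
  simp only [show n.1 - j + 1 = n.1 + 1 - j from by omega]
  rw [mul_comm (qbinom ζ n.1 j) (ζ^j)]

lemma leibnizA (hm : 2 ≤ m) (hζ : IsPrimitiveRoot ζ m) (x y : Fin m → B) :
    vA (mulA ζ cB x y) = mulA ζ cB (cA ζ cB x) (vA y) + mulA ζ cB (vA x) y := by
  funext n
  rw [Pi.add_apply, mulA_eq, mulA_eq, S_cA_vA]
  by_cases h : n.1 + 1 < m
  · show (if h : n.1 + 1 < m then (mulA ζ cB x y) ⟨n.1+1, h⟩ else 0) = _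
    rw [dif_pos h, mulA_eq ζ cB x y ⟨n.1+1, h⟩]
    exact S_succ ζ cB x y n.1
  · show (if h : n.1 + 1 < m then (mulA ζ cB x y) ⟨n.1+1, h⟩ else 0) = _
    rw [dif_neg h, ← S_succ]
    have hnm : n.1 + 1 = m := by have := n.2; omega
    rw [hnm]
    symm
    unfold S
    refine Finset.sum_eq_zero fun j hj => ?_
    rw [Finset.mem_range] at hj
    rcases Nat.eq_zero_or_pos j with rfl | hj0
    · rw [Nat.sub_zero]
      unfold Xe
      rw [dif_neg (lt_irrefl m), mul_zero, smul_zero]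
    rcases eq_or_lt_of_le (Nat.lt_succ_iff.mp hj) with rfl | hjm
    · unfold Xe
      rw [dif_neg (lt_irrefl j), map_zero, zero_mul, smul_zero]
    · rw [qbinom_root_zero hm hζ j hj0 hjm, zero_smul]

lemma cA_mulA (hc1 : ∀ u v : B, cB (u*v) = cB u * cB v) (x y : Fin m → B) :
    cA ζ cB (mulA ζ cB x y) = mulA ζ cB (cA ζ cB x) (cA ζ cB y) := by
  funext n
  rw [mulA_eq]
  show ζ ^ n.1 • cB (mulA ζ cB x y n) = _
  rw [mulA_eq]
  unfold S
  rw [map_sum, Finset.smul_sum]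
  refine Finset.sum_congr rfl fun j hj => ?_
  have hjn : j ≤ n.1 := by rw [Finset.mem_range] at hj; omega
  rw [map_smul, hc1, Xe_cA, Xe_cA, map_smul, smul_mul_assoc, mul_smul_comm,
    show ∀ u, cB ((cB^(n.1-j)) u) = (cB^(n.1-j)) (cB u) from fun u => by
      rw [← Module.End.mul_apply, ← pow_succ', pow_succ, Module.End.mul_apply]]
  simp only [smul_smul]
  congr 1
  have hjq : ζ^j * ζ^(n.1-j) = ζ^(n.1) := by
    rw [← pow_add]
    congr 1
    omega
  rw [← hjq]
  ring

lemma cA_add (x y : Fin m → B) : cA ζ cB (x + y) = cA ζ cB x + cA ζ cB y := by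
  funext n
  unfold cA
  rw [Pi.add_apply, Pi.add_apply, map_add, smul_add]

lemma cA_smul (s : F) (x : Fin m → B) : cA ζ cB (s • x) = s • cA ζ cB x := by
  funext n
  unfold cA
  rw [Pi.smul_apply, Pi.smul_apply, map_smul, smul_comm]

lemma cA_iter (t : ℕ) (x : Fin m → B) (n : Fin m) :
    (cA ζ cB)^[t] x n = ζ^(n.1*t) • (cB^t) (x n) := by
  induction t with
  | zero => simp
  | succ t ih =>
    rw [Function.iterate_succ_apply']
    show ζ ^ n.1 • cB ((cA ζ cB)^[t] x n) = _
    rw [ih, map_smul, smul_smul, ← pow_add,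
      show ∀ u, cB ((cB^t) u) = (cB^(t+1)) u from fun u => by
        rw [pow_succ', Module.End.mul_apply],
      show n.1 + n.1*t = n.1*(t+1) from by ring]

lemma cA_iter_m (hζ : IsPrimitiveRoot ζ m) (hpmId : ∀ b : B, (cB^m) b = b) (x : Fin m → B) :
    (cA ζ cB)^[m] x = x := by
  funext n
  rw [cA_iter, hpmId, mul_comm, pow_mul, hζ.pow_eq_one, one_pow, one_smul]

lemma cA_bij (hm : 1 ≤ m) (hid : ∀ x : Fin m → B, (cA ζ cB)^[m] x = x) :
    Function.Bijective (cA ζ cB (m := m)) := by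
  refine Function.bijective_iff_has_inverse.mpr ⟨(cA ζ cB)^[m-1], fun x => ?_, fun x => ?_⟩
  · have h := Function.iterate_succ_apply (cA ζ cB) (m-1) x
    rw [show (m-1).succ = m from by omega] at h
    rw [← h]
    exact hid x
  · have h := Function.iterate_succ_apply' (cA ζ cB) (m-1) x
    rw [show (m-1).succ = m from by omega] at h
    rw [← h]
    exact hid x

lemma vA_add (x y : Fin m → B) : vA (x + y) = vA x + vA y := by
  funext n
  show (if h : n.1 + 1 < m then (x+y) ⟨n.1+1,h⟩ else 0) = vA x n + vA y n
  unfold vA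
  by_cases h : n.1 + 1 < m
  · rw [dif_pos h, dif_pos h, dif_pos h, Pi.add_apply]
  · rw [dif_neg h, dif_neg h, dif_neg h, add_zero]

lemma vA_smul (s : F) (x : Fin m → B) : vA (s • x) = s • vA x := by
  funext n
  show (if h : n.1 + 1 < m then (s • x) ⟨n.1+1,h⟩ else 0) = s • vA x n
  unfold vA
  by_cases h : n.1 + 1 < m
  · rw [dif_pos h, dif_pos h, Pi.smul_apply]
  · rw [dif_neg h, dif_neg h, smul_zero]

lemma vA_cA (x : Fin m → B) : vA (cA ζ cB x) = ζ • cA ζ cB (vA x) := by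
  funext n
  show (if h : n.1 + 1 < m then (cA ζ cB x) ⟨n.1+1,h⟩ else 0) = ζ • cA ζ cB (vA x) n
  unfold cA vA
  by_cases h : n.1 + 1 < m
  · rw [dif_pos h, dif_pos h, smul_smul, ← pow_succ']
  · rw [dif_neg h, dif_neg h, map_zero, smul_zero, smul_zero]

lemma vA_iter (t : ℕ) (x : Fin m → B) (n : Fin m) :
    (vA (B := B))^[t] x n = if h : n.1 + t < m then x ⟨n.1 + t, h⟩ else 0 := by
  induction t generalizing x with
  | zero =>
    rw [Function.iterate_zero_apply, dif_pos (by simpa using n.2)]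
    congr 1 <;> exact Fin.ext (by omega)
  | succ t ih =>
    rw [Function.iterate_succ_apply, ih (vA x)]
    by_cases h1 : n.1 + (t+1) < m
    · rw [dif_pos (show n.1 + t < m from by omega), dif_pos h1]
      show (if h : n.1 + t + 1 < m then x ⟨n.1+t+1, h⟩ else 0) = _
      rw [dif_pos (show n.1 + t + 1 < m from by omega)]
      congr 1 <;> exact Fin.ext (by omega)
    · rw [dif_neg h1]
      by_cases h2 : n.1 + t < m
      · rw [dif_pos h2]
        show (if h : n.1 + t + 1 < m then x ⟨n.1+t+1, h⟩ else 0) = 0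
        rw [dif_neg (by omega)]
      · rw [dif_neg h2]

lemma vA_iter_m (x : Fin m → B) : (vA (B := B) (m := m))^[m] x = 0 := by
  funext n
  rw [vA_iter, dif_neg (by omega)]
  rfl

lemma mulA_ιA (hm : 1 ≤ m) (a b : B) :
    mulA ζ cB (ιA a) (ιA b) = ιA (m := m) (a*b) := by
  funext n
  rw [mulA_eq]
  unfold S
  rw [Finset.sum_eq_single 0 (fun j _ hj => by
      rw [Xe_ιA hm, if_neg hj, map_zero, zero_mul, smul_zero])
    (fun h => absurd (Finset.mem_range.mpr (by omega)) h)]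
  rw [Xe_ιA hm, Xe_ιA hm, if_pos rfl, Nat.sub_zero, qbinom_zero, one_smul]
  show (cB^n.1) a * (if n.1 = 0 then b else 0) = ιA (a*b) n
  unfold ιA
  by_cases hn : n.1 = 0
  · rw [if_pos hn, if_pos hn, hn, pow_zero, Module.End.one_apply]
  · rw [if_neg hn, if_neg hn, mul_zero]

lemma cA_ιA (a : B) : cA ζ cB (ιA a) = ιA (m := m) (cB a) := by
  funext n
  unfold cA ιA
  by_cases hn : n.1 = 0
  · rw [if_pos hn, if_pos hn, hn, pow_zero, one_smul]
  · rw [if_neg hn, if_neg hn, map_zero, smul_zero]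

/-- the embedding as a linear map -/
def ιL (F : Type*) [Field F] {B : Type*} [Ring B] [Algebra F B] (m : ℕ) :
    B →ₗ[F] (Fin m → B) where
  toFun := ιA
  map_add' a b := by
    funext n
    unfold ιA
    by_cases hn : n.1 = 0
    · simp only [if_pos hn, Pi.add_apply, ιA, if_pos hn]
    · simp only [if_neg hn, Pi.add_apply, ιA, if_neg hn, add_zero]
  map_smul' s a := by
    funext n
    unfold ιA
    by_cases hn : n.1 = 0
    · simp only [if_pos hn, Pi.smul_apply, ιA, if_pos hn, RingHom.id_apply]
    · simp only [if_neg hn, Pi.smul_apply, ιA, if_neg hn, smul_zero, RingHom.id_apply]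

end AB3
end TaftProof

open TaftProof in
/-- Starting from a graded-simple unital `ℤ_m`-graded algebra `B` with
associated automorphism `c_B`, the space `A(B) = B^m` with the multiplication `mulA` and
the maps `cA`, `vA` is an associative unital `F`-algebra carrying an `H_{m²}(ζ)`-module
algebra structure which is `H_{m²}(ζ)`-simple. -/
theorem graded_simple_gives_taft_simple
    {F B : Type*} [Field F] [Ring B] [Algebra F B]
    {m : ℕ} (hm : 2 ≤ m) {ζ : F} (hζ : IsPrimitiveRoot ζ m)
    (ℬ : ZMod m → Submodule F B) (hdec : DirectSum.IsInternal ℬ)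
    (hgmul : ∀ (i j : ZMod m), ∀ x ∈ ℬ i, ∀ y ∈ ℬ j, x * y ∈ ℬ (i + j))
    (hBB : ∃ x y : B, x * y ≠ 0)
    (hgsimple : ∀ I : Submodule F B, (∀ x ∈ I, ∀ b : B, b * x ∈ I ∧ x * b ∈ I) →
      I = (⨆ i : ZMod m, I ⊓ ℬ i) → I = ⊥ ∨ I = ⊤)
    (cB : B →ₗ[F] B)
    (hcB : ∀ i : ZMod m, ∀ b ∈ ℬ i, cB b = ζ ^ i.val • b) :
    -- `A(B)` is an associative unital `F`-algebra:
    (∀ x y z : Fin m → B, mulA ζ cB (mulA ζ cB x y) z = mulA ζ cB x (mulA ζ cB y z)) ∧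
    (∃ e : Fin m → B, ∀ x : Fin m → B, mulA ζ cB e x = x ∧ mulA ζ cB x e = x) ∧
    (∀ x y z : Fin m → B, mulA ζ cB (x + y) z = mulA ζ cB x z + mulA ζ cB y z ∧
      mulA ζ cB z (x + y) = mulA ζ cB z x + mulA ζ cB z y) ∧
    (∀ (s : F) (x y : Fin m → B), mulA ζ cB (s • x) y = s • mulA ζ cB x y ∧
      mulA ζ cB x (s • y) = s • mulA ζ cB x y) ∧
    -- `c` is an algebra automorphism of `A(B)` with `c^m = id`:
    Function.Bijective (cA ζ cB (m := m)) ∧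
    (∀ x y : Fin m → B, cA ζ cB (mulA ζ cB x y) = mulA ζ cB (cA ζ cB x) (cA ζ cB y)) ∧
    (∀ (s : F) (x y : Fin m → B), cA ζ cB (x + y) = cA ζ cB x + cA ζ cB y ∧
      cA ζ cB (s • x) = s • cA ζ cB x) ∧
    (∀ x : Fin m → B, (cA ζ cB)^[m] x = x) ∧
    -- `v` is `F`-linear and satisfies the Taft relations, with `v^m = 0`:
    (∀ (s : F) (x y : Fin m → B), vA (x + y) = vA x + vA y ∧ vA (s • x) = s • vA x) ∧
    (∀ x y : Fin m → B,
      vA (mulA ζ cB x y) = mulA ζ cB (cA ζ cB x) (vA y) + mulA ζ cB (vA x) y) ∧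
    (∀ x : Fin m → B, vA (cA ζ cB x) = ζ • cA ζ cB (vA x)) ∧
    (∀ x : Fin m → B, (vA (B := B) (m := m))^[m] x = 0) ∧
    -- `A(B)` is `H_{m²}(ζ)`-simple:
    (∃ x y : Fin m → B, mulA ζ cB x y ≠ 0) ∧
    (∀ I : Submodule F (Fin m → B),
      (∀ x ∈ I, ∀ b : Fin m → B, mulA ζ cB b x ∈ I ∧ mulA ζ cB x b ∈ I) →
      (∀ x ∈ I, cA ζ cB x ∈ I) → (∀ x ∈ I, vA x ∈ I) → I = ⊥ ∨ I = ⊤) := by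
  classical
  haveI : NeZero m := ⟨by omega⟩
  letI : DirectSum.Decomposition ℬ := hdec.chooseDecomposition
  have hm1 : 1 ≤ m := by omega
  have hc1 : ∀ u v : B, cB (u*v) = cB u * cB v := cB_mul hζ hgmul hcB
  have hpm : ∀ (t : ℕ) (u v : B), (cB^t) (u*v) = (cB^t) u * (cB^t) v :=
    cB_pow_mul hζ hgmul hcB
  have hpow1 : ∀ t : ℕ, (cB^t) (1:B) = 1 := cB_pow_one hζ hgmul hcB
  have hpmId : ∀ b : B, (cB^m) b = b := cB_pow_m hζ hcB
  refine ⟨assocA ζ cB hpm,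
    ⟨ιA 1, fun x => ⟨mulA_unit_left ζ cB hm1 hpow1 x, mulA_unit_right ζ cB hm1 x⟩⟩,
    fun x y z => ⟨mulA_add_left ζ cB x y z, mulA_add_right ζ cB x y z⟩,
    fun s x y => ⟨mulA_smul_left ζ cB s x y, mulA_smul_right ζ cB s x y⟩,
    cA_bij ζ cB hm1 (fun x => cA_iter_m ζ cB hζ hpmId x),
    fun x y => cA_mulA ζ cB hc1 x y,
    fun s x y => ⟨cA_add ζ cB x y, cA_smul ζ cB s x⟩,
    fun x => cA_iter_m ζ cB hζ hpmId x,
    fun s x y => ⟨vA_add x y, vA_smul s x⟩,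
    fun x y => leibnizA ζ cB hm hζ x y,
    fun x => vA_cA ζ cB x,
    fun x => vA_iter_m x,
    ?_, ?_⟩
  · obtain ⟨a, b, hab⟩ := hBB
    refine ⟨ιA a, ιA b, fun h => hab ?_⟩
    rw [mulA_ιA ζ cB hm1] at h
    have h0 := congrFun h ⟨0, by omega⟩
    simpa [ιA] using h0
  · intro I hImul hIc hIv
    by_cases hI0 : I = ⊥
    · left; exact hI0
    right
    obtain ⟨x, hxI, hx0⟩ := Submodule.ne_bot_iff I |>.mp hI0
    -- the set of indices where x is nonzero
    have hTne : (Finset.univ.filter (fun k : Fin m => x k ≠ 0)).Nonempty := by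
      obtain ⟨k, hk⟩ := Function.ne_iff.mp hx0
      exact ⟨k, Finset.mem_filter.mpr ⟨Finset.mem_univ k, hk⟩⟩
    set T := Finset.univ.filter (fun k : Fin m => x k ≠ 0) with hT
    set k := T.max' hTne with hkdef
    have hk : x k ≠ 0 := (Finset.mem_filter.mp (T.max'_mem hTne)).2
    have hmax : ∀ l : Fin m, x l ≠ 0 → l ≤ k :=
      fun l hl => T.le_max' l (Finset.mem_filter.mpr ⟨Finset.mem_univ l, hl⟩)
    -- v^[k] x = ιA (x k)
    have hvk : (vA (B := B) (m := m))^[k.1] x = ιA (x k) := by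
      funext j
      rw [vA_iter]
      show _ = (if j.1 = 0 then x k else 0)
      by_cases hj : j.1 = 0
      · rw [if_pos hj]
        have hlt : j.1 + k.1 < m := by rw [hj]; simpa using k.2
        rw [dif_pos hlt]
        congr 1
        exact Fin.ext (show j.1 + k.1 = k.1 by omega)
      · rw [if_neg hj]
        by_cases h2 : j.1 + k.1 < m
        · rw [dif_pos h2]
          by_contra h3
          have := hmax ⟨j.1 + k.1, h2⟩ h3
          rw [Fin.le_def] at this
          simp only at this
          omega
        · rw [dif_neg h2]
    have hvt : ∀ t : ℕ, (vA (B := B) (m := m))^[t] x ∈ I := by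
      intro t
      induction t with
      | zero => simpa using hxI
      | succ t ih => rw [Function.iterate_succ_apply']; exact hIv _ ih
    -- the ideal J of B
    set J : Submodule F B := I.comap (ιL F m) with hJdef
    have hmemJ : ∀ b : B, b ∈ J ↔ ιA (m := m) b ∈ I := fun b => Iff.rfl
    have hxkJ : x k ∈ J := by
      rw [hmemJ, ← hvk]
      exact hvt k.1
    have hJc : ∀ b ∈ J, cB b ∈ J := by
      intro b hb
      rw [hmemJ, ← cA_ιA ζ cB b]
      exact hIc _ hb
    have hJmul : ∀ b ∈ J, ∀ c : B, c * b ∈ J ∧ b * c ∈ J := by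
      intro b hb c
      have h1 := hImul (ιA b) hb (ιA c)
      constructor
      · have := h1.1
        rwa [hmemJ, ← mulA_ιA ζ cB hm1]
      · have := h1.2
        rwa [hmemJ, ← mulA_ιA ζ cB hm1]
    have hJgr : J = ⨆ i : ZMod m, J ⊓ ℬ i := by
      refine le_antisymm (fun b hb => ?_) (iSup_le fun i => inf_le_left)
      have hs : ∑ i : ZMod m, π ℬ i b ∈ ⨆ i : ZMod m, J ⊓ ℬ i :=
        Submodule.sum_mem _ fun i _ => Submodule.mem_iSup_of_mem i
          ⟨π_mem_of_stable hζ hcB J hJc hb i, π_mem i b⟩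
      rwa [sum_π b] at hs
    rcases hgsimple J hJmul hJgr with hJ | hJ
    · exfalso
      rw [hJ] at hxkJ
      exact hk (Submodule.mem_bot F |>.mp hxkJ)
    · have h1I : ιA (m := m) (1:B) ∈ I := by
        rw [← hmemJ, hJ]
        trivial
      rw [Submodule.eq_top_iff']
      intro y
      have := (hImul _ h1I y).1
      rwa [mulA_unit_right ζ cB hm1] at this
end
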